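/- arXiv:math/0509377 — 4 statements merged into one kernel-verified Lean document; each statement's English description precedes it below -/
import Mathlib

section
/- Let n ≥ 5 and let U be a subgroup of index n in the alternating group A_n. Then there exists an automorphism α of A_n such that α(U) = V₁, where V₁ = {g ∈ A_n : g fixes the point 1} is the point stabilizer, which is isomorphic to A_{n-1}. -/
/-!
Since `Aₙ` is simple and `U ≠ Aₙ`, the action of `Aₙ` on the `n` cosets of `U` is faithful,
so it embeds `Aₙ` into `Sₙ` as a subgroup of index 2, i.e. onto `Aₙ` itself. Numbering the
cosets so that `U` gets the number `1` makes this embedding an automorphism of `Aₙ` carrying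
`U`, the stabilizer of the coset `U`, onto the stabilizer of `1`.
-/

open Equiv Equiv.Perm MulAction

theorem Subgroup.normalCore_eq_bot_of_ne_top {G : Type*} [Group G] [IsSimpleGroup G]
    {U : Subgroup G} (hU : U ≠ ⊤) : U.normalCore = ⊥ :=
  U.normalCore_normal.eq_bot_or_eq_top.resolve_right
    fun h ↦ hU (top_le_iff.mp (h ▸ U.normalCore_le))

theorem Subgroup.injective_toPermHom_quotient {G : Type*} [Group G] {U : Subgroup G}
    (hU : U.normalCore = ⊥) : Function.Injective (toPermHom G (G ⧸ U)) := by
  rwa [← MonoidHom.ker_eq_bot_iff, ← Subgroup.normalCore_eq_ker]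

theorem exists_equiv_apply_eq_of_card_eq {X Y : Type*} [Finite X] [Finite Y] [DecidableEq Y]
    (h : Nat.card X = Nat.card Y) (x : X) (y : Y) : ∃ e : X ≃ Y, e x = y := by
  obtain ⟨e⟩ := Finite.card_eq.mp h
  exact ⟨e.trans (swap (e x) y), swap_apply_left _ _⟩

namespace alternatingGroup

variable {α : Type*} [Fintype α] [DecidableEq α]

theorem range_eq_of_injective [Nontrivial α] {f : alternatingGroup α →* Perm α}
    (hf : Function.Injective f) : f.range = alternatingGroup α := by
  apply eq_alternatingGroup_of_index_eq_two
  have hcard : Nat.card f.range = Nat.card (alternatingGroup α) :=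
    Nat.card_congr (MonoidHom.ofInjective hf).toEquiv.symm
  have := f.range.card_mul_index
  rw [hcard, ← two_mul_nat_card_alternatingGroup, mul_comm 2] at this
  exact Nat.eq_of_mul_eq_mul_left Nat.card_pos this

def ofSubtypeNe (a : α) :
    alternatingGroup {x // x ≠ a} →* stabilizer (alternatingGroup α) a where
  toFun g := ⟨⟨Perm.ofSubtype (g : Perm {x // x ≠ a}), by
      rw [mem_alternatingGroup, sign_ofSubtype]; exact g.2⟩,
    ofSubtype_apply_of_not_mem _ (not_not.2 rfl)⟩
  map_one' := by ext; simp
  map_mul' g h := by ext; simp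

theorem ofSubtypeNe_bijective (a : α) : Function.Bijective (ofSubtypeNe a) := by
  refine ⟨fun g h hgh ↦ Subtype.ext (Perm.ofSubtype_injective congr($hgh.1.1)), ?_⟩
  rintro ⟨⟨g, hg⟩, hga : g a = a⟩
  have hne : ∀ x, g x ≠ a ↔ x ≠ a := fun x ↦ (g.injective.eq_iff' hga).not
  have hmoved : ∀ x, g x ≠ x → x ≠ a := fun x hx hxa ↦ hx (hxa ▸ hga)
  refine ⟨⟨g.subtypePerm hne, by
    rwa [mem_alternatingGroup, sign_subtypePerm _ hne hmoved]⟩, ?_⟩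
  ext1; ext1
  exact ofSubtype_subtypePerm hne hmoved

noncomputable def stabilizerMulEquiv (a : α) :
    stabilizer (alternatingGroup α) a ≃* alternatingGroup {x // x ≠ a} :=
  (MulEquiv.ofBijective _ (ofSubtypeNe_bijective a)).symm

theorem exists_mulEquiv_map_eq_stabilizer (h5 : 5 ≤ Nat.card α)
    {U : Subgroup (alternatingGroup α)} (hU : U.index = Nat.card α) (a : α) :
    ∃ φ : alternatingGroup α ≃* alternatingGroup α,
      U.map φ.toMonoidHom = stabilizer (alternatingGroup α) a := by
  have := isSimpleGroup h5
  have : Nontrivial α := Finite.one_lt_card_iff_nontrivial.mp (by omega)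
  have hUtop : U ≠ ⊤ := by rintro rfl; rw [Subgroup.index_top] at hU; omega
  obtain ⟨e, he⟩ :=
    exists_equiv_apply_eq_of_card_eq hU (QuotientGroup.mk 1 : alternatingGroup α ⧸ U) a
  let f :=
    e.permCongrHom.toMonoidHom.comp (toPermHom (alternatingGroup α) (alternatingGroup α ⧸ U))
  have hf : Function.Injective f := e.permCongrHom.injective.comp
    (Subgroup.injective_toPermHom_quotient (Subgroup.normalCore_eq_bot_of_ne_top hUtop))
  let φ := (MonoidHom.ofInjective hf).trans (MulEquiv.subgroupCongr (range_eq_of_injective hf))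
  refine ⟨φ, ?_⟩
  ext g
  obtain ⟨h, rfl⟩ := φ.surjective g
  have he' : e.symm a = QuotientGroup.mk 1 := by rw [← he, symm_apply_apply]
  have hφ : (φ h : Perm α) a = e (h • e.symm a) := rfl
  rw [Subgroup.mem_map_equiv, φ.symm_apply_apply, mem_stabilizer_iff, Subgroup.smul_def,
    Perm.smul_def, hφ, ← eq_symm_apply, he', ← mem_stabilizer_iff, stabilizer_quotient]

end alternatingGroup

/-- For `n ≥ 5`, every subgroup of index `n` in `Aₙ` is mapped by some automorphism of `Aₙ`
onto the stabilizer `V₁` of a point, and `V₁ ≅ A_{n-1}`. -/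
theorem statement3 (n : ℕ) (hn : 5 ≤ n)
    (U : Subgroup (alternatingGroup (Fin n))) (hU : U.index = n) :
    (∃ α : (alternatingGroup (Fin n)) ≃* (alternatingGroup (Fin n)),
        U.map α.toMonoidHom =
          MulAction.stabilizer (alternatingGroup (Fin n)) (⟨0, by omega⟩ : Fin n)) ∧
      Nonempty
        (↥(MulAction.stabilizer (alternatingGroup (Fin n)) (⟨0, by omega⟩ : Fin n)) ≃*
          alternatingGroup (Fin (n - 1))) := by
  refine ⟨alternatingGroup.exists_mulEquiv_map_eq_stabilizer (by simpa using hn)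
    (by simpa using hU) _, ⟨?_⟩⟩
  have hcard : Fintype.card {x : Fin n // x ≠ ⟨0, by omega⟩} = n - 1 := by
    simp [Fintype.card_subtype_compl]
  exact (alternatingGroup.stabilizerMulEquiv _).trans (Fintype.equivFinOfCardEq hcard).altCongrHom
end

section
/- Let p be a prime with p ≡ ±1 (mod 8), let K = PSL(2,p) regarded as a (normal) subgroup of G = PGL(2,p). Then any two elementary abelian subgroups of order 4 (Klein four-subgroups) of K are conjugate in G. -/
open Matrix

variable {F : Type*} [Field F]

local notation "M2" => Matrix (Fin 2) (Fin 2) F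
local notation "pmk" => QuotientGroup.mk' (Subgroup.center (GL (Fin 2) F))

lemma center_of_scalar (u : GL (Fin 2) F) (t : F) (h : (u : M2) = t • 1) :
    u ∈ Subgroup.center (GL (Fin 2) F) := by
  rw [Subgroup.mem_center_iff]
  intro g
  ext i j
  show ((g * u : GL (Fin 2) F) : M2) i j = ((u * g : GL (Fin 2) F) : M2) i j
  rw [Units.val_mul, Units.val_mul, h, smul_one_mul, mul_smul_one]

lemma scalar_of_center {u : GL (Fin 2) F} (h : u ∈ Subgroup.center (GL (Fin 2) F)) :
    ∃ t : F, (u : M2) = t • 1 := by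
  have h2 : ∀ t : TransvectionStruct (Fin 2) F, Commute t.toMatrix (u : M2) := by
    intro t
    have := Subgroup.mem_center_iff.mp h ⟨t.toMatrix, t.inv.toMatrix, t.mul_inv, t.inv_mul⟩
    exact congrArg Units.val this
  obtain ⟨r, hr⟩ := Matrix.mem_range_scalar_of_commute_transvectionStruct h2
  exact ⟨r, by rw [← hr]; simp [Matrix.scalar_apply, Matrix.smul_one_eq_diagonal]⟩

lemma pmk_eq_of_scalar {u v : GL (Fin 2) F} (t : F) (h : (v : M2) = t • (u : M2)) :
    pmk u = pmk v := by
  rw [QuotientGroup.mk'_eq_mk']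
  refine ⟨u⁻¹ * v, center_of_scalar _ t ?_, by group⟩
  rw [Units.val_mul, h, mul_smul_comm]
  congr 1
  exact u.inv_mul

lemma scalar_of_pmk_eq {u v : GL (Fin 2) F} (h : pmk u = pmk v) :
    ∃ t : F, (v : M2) = t • (u : M2) := by
  rw [QuotientGroup.mk'_eq_mk'] at h
  obtain ⟨z, hz, hzv⟩ := h
  obtain ⟨t, ht⟩ := scalar_of_center hz
  exact ⟨t, by rw [← hzv, Units.val_mul, ht, mul_smul_one]⟩

lemma pmk_eq_one_of_scalar {u : GL (Fin 2) F} (t : F) (h : (u : M2) = t • 1) :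
    pmk u = 1 := by
  rw [QuotientGroup.mk'_apply, QuotientGroup.eq_one_iff]
  exact center_of_scalar _ t h


lemma gen2 {G : Type*} [Group G] (T : Subgroup G) (hcard : Nat.card T = 4)
    (helem : ∀ x ∈ T, x * x = 1) :
    ∃ x y : G, x ∈ T ∧ y ∈ T ∧ x ≠ 1 ∧ y ≠ 1 ∧ x ≠ y ∧ T = Subgroup.closure {x, y} := by
  have hfin : Finite T := Nat.finite_of_card_ne_zero (by omega)
  have hbot : T ≠ ⊥ := by
    intro h
    rw [h] at hcard
    simp [Nat.card_eq_fintype_card] at hcard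
  obtain ⟨a, ha⟩ := Subgroup.ne_bot_iff_exists_ne_one.mp hbot
  set x := (a : G) with hxdef
  have hxT : x ∈ T := a.2
  have hx1 : x ≠ 1 := fun h => ha (Subtype.ext h)
  have hordx : orderOf x = 2 := by
    refine orderOf_eq_prime ?_ hx1
    rw [pow_two]; exact helem x hxT
  have hzle : Subgroup.zpowers x ≤ T := Subgroup.zpowers_le.mpr hxT
  have hzcard : Nat.card (Subgroup.zpowers x) = 2 := by
    rw [Nat.card_zpowers, hordx]
  have hzne : Subgroup.zpowers x ≠ T := by
    intro h; rw [h, hcard] at hzcard; omega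
  obtain ⟨y, hyT, hyz⟩ := SetLike.exists_of_lt (hzle.lt_of_ne hzne)
  have hy1 : y ≠ 1 := fun h => hyz (h ▸ (Subgroup.zpowers x).one_mem)
  have hyx : x ≠ y := fun h => hyz (h ▸ Subgroup.mem_zpowers x)
  refine ⟨x, y, hxT, hyT, hx1, hy1, hyx, ?_⟩
  have hsub : ({x, y} : Set G) ⊆ T := by
    intro z hz
    rcases hz with rfl | rfl
    · exact hxT
    · simpa using hyT
  have hKT : Subgroup.closure {x, y} ≤ T := (Subgroup.closure_le T).mpr hsub
  have hzleK : Subgroup.zpowers x ≤ Subgroup.closure {x, y} :=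
    Subgroup.zpowers_le.mpr (Subgroup.subset_closure (by simp))
  have hdvd : Nat.card (Subgroup.closure ({x, y} : Set G)) ∣ 4 := by
    rw [← hcard]
    exact Subgroup.card_dvd_of_le hKT
  have h2dvd : 2 ∣ Nat.card (Subgroup.closure ({x, y} : Set G)) := by
    rw [← hzcard]
    exact Subgroup.card_dvd_of_le hzleK
  have hpos : 0 < Nat.card (Subgroup.closure ({x, y} : Set G)) :=
    Nat.pos_of_dvd_of_pos hdvd (by norm_num)
  have hKfin : Finite (Subgroup.closure ({x, y} : Set G)) :=
    Nat.finite_of_card_ne_zero (by omega)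
  have hne2 : Nat.card (Subgroup.closure ({x, y} : Set G)) ≠ 2 := by
    intro h
    have : Subgroup.zpowers x = Subgroup.closure {x, y} :=
      Subgroup.eq_of_le_of_card_ge hzleK (by rw [h, hzcard])
    exact hyz (this ▸ Subgroup.subset_closure (by simp : y ∈ ({x, y} : Set G)))
  have hle4 : Nat.card (Subgroup.closure ({x, y} : Set G)) ≤ 4 :=
    Nat.le_of_dvd (by norm_num) hdvd
  have hc4 : Nat.card (Subgroup.closure ({x, y} : Set G)) = 4 := by omega
  exact (Subgroup.eq_of_le_of_card_ge hKT (by rw [hcard, hc4])).symm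





/-- entry equations from a product identity -/
lemma entries_of_mul_eq {A B C : M2} (h : A * B = C) :
    (A 0 0 * B 0 0 + A 0 1 * B 1 0 = C 0 0) ∧ (A 0 0 * B 0 1 + A 0 1 * B 1 1 = C 0 1) ∧
    (A 1 0 * B 0 0 + A 1 1 * B 1 0 = C 1 0) ∧ (A 1 0 * B 0 1 + A 1 1 * B 1 1 = C 1 1) := by
  refine ⟨?_, ?_, ?_, ?_⟩ <;>
    · rw [← h, Matrix.mul_apply, Fin.sum_univ_two]

lemma neg_one_apply_00 : (-1 : M2) 0 0 = -1 := by simp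
lemma neg_one_apply_01 : (-1 : M2) 0 1 = 0 := by simp
lemma neg_one_apply_10 : (-1 : M2) 1 0 = 0 := by simp
lemma neg_one_apply_11 : (-1 : M2) 1 1 = -1 := by simp

/-- An involution in SL2 is scalar. -/
lemma invol_scalar (h2 : (2 : F) ≠ 0) {A : M2} (hd : A.det = 1) (hA : A * A = 1) :
    ∃ t : F, A = t • 1 := by
  obtain ⟨e00, e01, e10, e11⟩ := entries_of_mul_eq hA
  simp only [Matrix.one_apply_eq, Matrix.one_apply_ne (by norm_num : (0:Fin 2) ≠ 1),
    Matrix.one_apply_ne (by norm_num : (1:Fin 2) ≠ 0)] at e00 e01 e10 e11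
  rw [Matrix.det_fin_two] at hd
  set a := A 0 0; set b := A 0 1; set c := A 1 0; set d := A 1 1
  have hb : b * (a + d) = 0 := by ring_nf; linear_combination e01
  have hc : c * (a + d) = 0 := by ring_nf; linear_combination e10
  have had : a + d ≠ 0 := by
    intro h
    exact h2 (by linear_combination (-1:F) * e00 - hd + a * h)
  have hb0 : b = 0 := by
    rcases mul_eq_zero.mp hb with h | h
    · exact h
    · exact absurd h had
  have hc0 : c = 0 := by
    rcases mul_eq_zero.mp hc with h | h
    · exact h
    · exact absurd h had
  have hae : a = d := by
    have h1 : (a - d) * (a + d) = 0 := by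
      rw [hb0] at e00; rw [hc0] at e11; ring_nf; linear_combination e00 - e11
    rcases mul_eq_zero.mp h1 with h | h
    · linear_combination h
    · exact absurd h had
  refine ⟨a, ?_⟩
  rw [Matrix.eta_fin_two A, Matrix.smul_one_eq_diagonal,
    show A 0 1 = 0 from hb0, show A 1 0 = 0 from hc0, show A 1 1 = a from hae.symm]
  ext i j
  fin_cases i <;> fin_cases j <;> simp <;> rfl

lemma eq_smul_one_of_entries {A : M2} (hb : A 0 1 = 0) (hc : A 1 0 = 0)
    (hd : A 1 1 = A 0 0) : A = A 0 0 • 1 := by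
  rw [Matrix.smul_one_eq_diagonal]
  rw [Matrix.eta_fin_two A, hb, hc, hd]
  ext i j
  fin_cases i <;> fin_cases j <;> simp

/-- trace zero and norm form for square -1 nonscalar -/
lemma tr0 {A : M2} (hA : A * A = -1) (hns : ∀ t : F, A ≠ t • 1) :
    A 1 1 = -A 0 0 ∧ A 0 0 * A 0 0 + A 0 1 * A 1 0 = -1 := by
  obtain ⟨e00, e01, e10, e11⟩ := entries_of_mul_eq hA
  rw [neg_one_apply_00] at e00
  rw [neg_one_apply_01] at e01
  rw [neg_one_apply_10] at e10
  rw [neg_one_apply_11] at e11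
  set a := A 0 0; set b := A 0 1; set c := A 1 0; set d := A 1 1
  have had : a + d = 0 := by
    by_contra had
    have hb0 : b = 0 := by
      rcases mul_eq_zero.mp (show b * (a + d) = 0 by linear_combination e01) with h | h
      · exact h
      · exact absurd h had
    have hc0 : c = 0 := by
      rcases mul_eq_zero.mp (show c * (a + d) = 0 by linear_combination e10) with h | h
      · exact h
      · exact absurd h had
    have hae : d = a := by
      rcases mul_eq_zero.mp (show (a - d) * (a + d) = 0 by
        rw [hb0] at e00; rw [hc0] at e11; linear_combination e00 - e11) with h | h
      · linear_combination -h
      · exact absurd h had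
    exact hns a (eq_smul_one_of_entries hb0 hc0 hae)
  constructor
  · linear_combination had
  · exact e00


lemma smul_fin_two (t a b c d : F) : t • !![a,b;c,d] = !![t*a,t*b;t*c,t*d] := by
  ext i j
  fin_cases i <;> fin_cases j <;> simp

lemma comm_scalar_entries (h2 : (2 : F) ≠ 0) {a b c e f g : F}
    (hnA : a*a + b*c = -1)
    (hcomm : !![a,b;c,-a] * !![e,f;g,-e] = !![e,f;g,-e] * !![a,b;c,-a]) :
    ∃ t : F, !![e,f;g,-e] = t • !![a,b;c,-a] := by
  simp only [Matrix.mul_fin_two, ← Matrix.ext_iff, Fin.forall_fin_two, Matrix.cons_val',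
    Matrix.cons_val_zero, Matrix.cons_val_one, Matrix.head_cons, Matrix.empty_val',
    Matrix.cons_val_fin_one, Matrix.head_fin_const, Matrix.of_apply] at hcomm
  obtain ⟨⟨h1, hf⟩, ⟨h3, -⟩⟩ := hcomm
  have hbg : b * g = f * c := by linear_combination h1
  have haf : a * f = b * e := by
    rcases mul_eq_zero.mp (show (2:F) * (a * f - b * e) = 0 by linear_combination hf) with h | h
    · exact absurd h h2
    · linear_combination h
  have hce : c * e = a * g := by
    rcases mul_eq_zero.mp (show (2:F) * (c * e - a * g) = 0 by linear_combination h3) with h | h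
    · exact absurd h h2
    · linear_combination h
  by_cases ha : a = 0
  · have hbne : b ≠ 0 := by
      intro hb0
      rw [ha, hb0] at hnA
      exact one_ne_zero (show (1:F) = 0 by linear_combination hnA)
    have he0 : e = 0 := by
      rcases mul_eq_zero.mp (show b * e = 0 by linear_combination -haf + f * ha) with h | h
      · exact absurd h hbne
      · exact h
    refine ⟨f / b, ?_⟩
    rw [smul_fin_two, ← Matrix.ext_iff]
    simp only [Fin.forall_fin_two, Matrix.cons_val', Matrix.cons_val_zero, Matrix.cons_val_one,
      Matrix.head_cons, Matrix.empty_val', Matrix.cons_val_fin_one, Matrix.head_fin_const,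
      Matrix.of_apply]
    refine ⟨⟨?_, ?_⟩, ?_, ?_⟩ <;> field_simp <;>
      first
        | linear_combination b * he0 - f * ha
        | linear_combination hbg
        | linear_combination haf
  · refine ⟨e / a, ?_⟩
    rw [smul_fin_two, ← Matrix.ext_iff]
    simp only [Fin.forall_fin_two, Matrix.cons_val', Matrix.cons_val_zero, Matrix.cons_val_one,
      Matrix.head_cons, Matrix.empty_val', Matrix.cons_val_fin_one, Matrix.head_fin_const,
      Matrix.of_apply]
    refine ⟨⟨?_, ?_⟩, ?_, ?_⟩ <;> field_simp <;>
      first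
        | linear_combination haf
        | linear_combination -hce

lemma normalizeJ (h2 : (2 : F) ≠ 0) {a b c : F} (hn : a*a + b*c = -1) :
    ∃ P : M2, P.det ≠ 0 ∧ !![a,b;c,-a] * P = P * !![0,-1;1,0] := by
  by_cases hc : c ≠ 0
  · refine ⟨!![1, a; 0, c], ?_, ?_⟩
    · rw [Matrix.det_fin_two_of]; simpa using hc
    · rw [Matrix.mul_fin_two, Matrix.mul_fin_two, ← Matrix.ext_iff]
      simp only [Fin.forall_fin_two, Matrix.cons_val', Matrix.cons_val_zero, Matrix.cons_val_one,
        Matrix.head_cons, Matrix.empty_val', Matrix.cons_val_fin_one, Matrix.head_fin_const,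
        Matrix.of_apply]
      exact ⟨⟨by ring, by linear_combination hn⟩, by ring, by ring⟩
  · push_neg at hc
    by_cases hb : b ≠ 0
    · refine ⟨!![0, b; 1, -a], ?_, ?_⟩
      · rw [Matrix.det_fin_two_of]; simpa using hb
      · rw [Matrix.mul_fin_two, Matrix.mul_fin_two, ← Matrix.ext_iff]
        simp only [Fin.forall_fin_two, Matrix.cons_val', Matrix.cons_val_zero,
          Matrix.cons_val_one, Matrix.head_cons, Matrix.empty_val', Matrix.cons_val_fin_one,
          Matrix.head_fin_const, Matrix.of_apply]
        exact ⟨⟨by ring, by ring⟩, by ring, by linear_combination hn⟩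
    · push_neg at hb
      have ha2 : a * a = -1 := by rw [hb, hc] at hn; linear_combination hn
      have hane : a ≠ 0 := by
        intro h; rw [h] at ha2
        exact one_ne_zero (show (1:F) = 0 by linear_combination ha2)
      refine ⟨!![1, a; 1, -a], ?_, ?_⟩
      · rw [Matrix.det_fin_two_of]
        intro h
        rcases mul_eq_zero.mp (show (-2 : F) * a = 0 by linear_combination h) with h' | h'
        · exact h2 (by linear_combination -h')
        · exact hane h'
      · rw [Matrix.mul_fin_two, Matrix.mul_fin_two, ← Matrix.ext_iff]
        simp only [Fin.forall_fin_two, Matrix.cons_val', Matrix.cons_val_zero,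
          Matrix.cons_val_one, Matrix.head_cons, Matrix.empty_val', Matrix.cons_val_fin_one,
          Matrix.head_fin_const, Matrix.of_apply]
        exact ⟨⟨by linear_combination hb, by linear_combination ha2 - a*hb⟩,
          by linear_combination hc, by linear_combination ha2 + a*hc⟩

lemma anticomm_form {C : M2} (hC : C * C = -1)
    (hJC : !![(0:F),-1;1,0] * C = -(C * !![(0:F),-1;1,0])) :
    C = !![C 0 0, C 0 1; C 0 1, -(C 0 0)] ∧ C 0 0 * C 0 0 + C 0 1 * C 0 1 = -1 := by
  rw [Matrix.eta_fin_two C] at hJC hC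
  set e := C 0 0; set f := C 0 1; set g := C 1 0; set k := C 1 1
  simp only [Matrix.mul_fin_two] at hJC hC
  rw [← Matrix.ext_iff] at hJC
  rw [← Matrix.ext_iff] at hC
  simp only [Fin.forall_fin_two, Matrix.cons_val', Matrix.cons_val_zero, Matrix.cons_val_one,
    Matrix.head_cons, Matrix.empty_val', Matrix.cons_val_fin_one, Matrix.head_fin_const,
    Matrix.of_apply, Matrix.one_fin_two, Matrix.neg_apply] at hJC hC
  obtain ⟨⟨j1, j2⟩, j3, j4⟩ := hJC
  obtain ⟨⟨c1, c2⟩, c3, c4⟩ := hC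
  have hg : g = f := by linear_combination -j1
  have hk : k = -e := by linear_combination -j2
  constructor
  · conv_lhs => rw [Matrix.eta_fin_two C]
    show !![e,f;g,k] = !![e,f;f,-e]
    rw [hg, hk]
  · linear_combination c1 - f * hg

lemma rotation_conj (h2 : (2 : F) ≠ 0) {b c b' c' : F}
    (hb : b*b + c*c = -1) (hb' : b'*b' + c'*c' = -1) :
    ∃ g : M2, g.det ≠ 0 ∧ g * !![0,-1;1,0] = !![0,-1;1,0] * g ∧
      g * !![b,c;c,-b] = !![b',c';c',-b'] * g := by
  have key : ∀ x y : F, x*(b-b') = y*(c+c') → x*(c-c') = -(y*(b+b')) → x*x+y*y ≠ 0 →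
      ∃ g : M2, g.det ≠ 0 ∧ g * !![0,-1;1,0] = !![0,-1;1,0] * g ∧
        g * !![b,c;c,-b] = !![b',c';c',-b'] * g := by
    intro x y e1 e2 hnz
    refine ⟨!![x,-y;y,x], ?_, ?_, ?_⟩
    · rw [Matrix.det_fin_two_of]
      intro h; exact hnz (by linear_combination h)
    · rw [Matrix.mul_fin_two, Matrix.mul_fin_two, ← Matrix.ext_iff]
      simp only [Fin.forall_fin_two, Matrix.cons_val', Matrix.cons_val_zero, Matrix.cons_val_one,
        Matrix.head_cons, Matrix.empty_val', Matrix.cons_val_fin_one, Matrix.head_fin_const,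
        Matrix.of_apply]
      exact ⟨⟨by ring, by ring⟩, by ring, by ring⟩
    · rw [Matrix.mul_fin_two, Matrix.mul_fin_two, ← Matrix.ext_iff]
      simp only [Fin.forall_fin_two, Matrix.cons_val', Matrix.cons_val_zero, Matrix.cons_val_one,
        Matrix.head_cons, Matrix.empty_val', Matrix.cons_val_fin_one, Matrix.head_fin_const,
        Matrix.of_apply]
      exact ⟨⟨by linear_combination e1, by linear_combination e2⟩,
        by linear_combination e2, by linear_combination -e1⟩
  by_cases h1 : (c+c')*(c+c') + (b-b')*(b-b') = 0
  · refine key (-(b+b')) (c-c') (by linear_combination -hb + hb') (by ring) ?_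
    intro h
    have h4 : (2:F) * 2 = 0 := by linear_combination -h - h1 + 2*hb + 2*hb'
    rcases mul_eq_zero.mp h4 with h' | h' <;> exact h2 h'
  · exact key (c+c') (b-b') (by ring) (by linear_combination hb - hb') (fun h => h1 (by linear_combination h))

lemma ns_of_anticomm (h2 : (2 : F) ≠ 0) {X Y : (M2)ˣ}
    (hXY : (X : M2) * Y = -((Y : M2) * X)) (t : F) : (X : M2) ≠ t • 1 := by
  intro h
  rw [h, smul_one_mul, mul_smul_one] at hXY
  have h20 : ((2*t) • (Y : M2)) = 0 := by
    rw [mul_smul, two_smul]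
    rw [eq_neg_iff_add_eq_zero] at hXY
    exact hXY
  have h21 : ((2*t) • ((Y : M2) * (Y⁻¹ : (M2)ˣ))) = 0 := by
    rw [← smul_mul_assoc, h20, zero_mul]
  rw [Units.mul_inv] at h21
  have ht : t = 0 := by
    have := congrFun (congrFun h21 0) 0
    simp at this
    rcases this with h' | h'
    · exact absurd h' h2
    · exact h'
  rw [ht, zero_smul] at h
  have hmul := X.mul_inv
  rw [h, zero_mul] at hmul
  have := congrFun (congrFun hmul 0) 0
  simp at this

/-- The standard unit `J`. -/
def Ju : (M2)ˣ where
  val := !![0,-1;1,0]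
  inv := !![0,1;-1,0]
  val_inv := by ext i j; fin_cases i <;> fin_cases j <;> simp [Matrix.mul_apply, Fin.sum_univ_two]
  inv_val := by ext i j; fin_cases i <;> fin_cases j <;> simp [Matrix.mul_apply, Fin.sum_univ_two]

lemma conj_units (h2 : (2 : F) ≠ 0) {A B A' B' : (M2)ˣ}
    (hA : (A : M2) * A = -1) (hB : (B : M2) * B = -1)
    (hAB : (A : M2) * B = -((B : M2) * A))
    (hA' : (A' : M2) * A' = -1) (hB' : (B' : M2) * B' = -1)
    (hAB' : (A' : M2) * B' = -((B' : M2) * A')) :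
    ∃ G : (M2)ˣ, G * A * G⁻¹ = A' ∧ G * B * G⁻¹ = B' := by
  -- common normalization construction
  have main : ∀ (X Y : (M2)ˣ), (X : M2) * X = -1 → (Y : M2) * Y = -1 →
      ((X : M2) * Y = -((Y : M2) * X)) →
      ∃ P : (M2)ˣ, X * P = P * (Ju : (M2)ˣ) := by
    intro X Y hX hY hXY
    obtain ⟨htr, hnrm⟩ := tr0 hX (ns_of_anticomm h2 hXY)
    have hXe : (X : M2) = !![(X:M2) 0 0, (X:M2) 0 1; (X:M2) 1 0, -((X:M2) 0 0)] := by
      conv_lhs => rw [Matrix.eta_fin_two (X : M2)]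
      rw [htr]
    obtain ⟨P, hPdet, hPeq⟩ := normalizeJ h2 hnrm
    have hPu : IsUnit P := (Matrix.isUnit_iff_isUnit_det P).mpr (isUnit_iff_ne_zero.mpr hPdet)
    refine ⟨hPu.unit, Units.ext ?_⟩
    push_cast [Units.val_mul, hPu.unit_spec]
    rw [hXe]
    exact hPeq
  obtain ⟨P, hP⟩ := main A B hA hB hAB
  obtain ⟨P', hP'⟩ := main A' B' hA' hB' hAB'
  -- conjugated matrices
  set C1 : (M2)ˣ := P⁻¹ * B * P with hC1def
  set C2 : (M2)ˣ := P'⁻¹ * B' * P' with hC2def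
  have hJP : (Ju : (M2)ˣ) = P⁻¹ * A * P := by
    rw [mul_assoc, eq_inv_mul_iff_mul_eq]; exact hP.symm
  have hJP' : (Ju : (M2)ˣ) = P'⁻¹ * A' * P' := by
    rw [mul_assoc, eq_inv_mul_iff_mul_eq]; exact hP'.symm
  have hC1sq : (C1 : M2) * C1 = -1 := by
    have : C1 * C1 = P⁻¹ * (B * B) * P := by rw [hC1def]; group
    have hval := congrArg Units.val this
    rw [Units.val_mul] at hval
    rw [hval]
    have : ((P⁻¹ * (B * B) * P : (M2)ˣ) : M2) = (P⁻¹ : (M2)ˣ) * ((B:M2) * B) * P := by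
      push_cast [Units.val_mul]; ring
    rw [this, hB, mul_neg_one, neg_mul, Units.inv_mul]
  have hC2sq : (C2 : M2) * C2 = -1 := by
    have h0 : C2 * C2 = P'⁻¹ * (B' * B') * P' := by rw [hC2def]; group
    have hval := congrArg Units.val h0
    rw [Units.val_mul] at hval
    rw [hval]
    have h1 : ((P'⁻¹ * (B' * B') * P' : (M2)ˣ) : M2) = (P'⁻¹ : (M2)ˣ) * ((B':M2) * B') * P' := by
      push_cast [Units.val_mul]; ring
    rw [h1, hB', mul_neg_one, neg_mul, Units.inv_mul]
  have hABu : A * B = -(B * A) := by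
    apply Units.ext
    simp only [Units.val_mul, Units.val_neg]
    exact hAB
  have hABu' : A' * B' = -(B' * A') := by
    apply Units.ext
    simp only [Units.val_mul, Units.val_neg]
    exact hAB'
  have hanti1 : Ju * C1 = -(C1 * Ju) := by
    calc Ju * C1 = P⁻¹ * (A * B) * P := by rw [hJP, hC1def]; group
      _ = P⁻¹ * (-(B * A)) * P := by rw [hABu]
      _ = -(P⁻¹ * (B * A) * P) := by rw [mul_neg, neg_mul]
      _ = -(C1 * Ju) := neg_inj.mpr (by rw [hC1def, hJP]; group)
  have hanti2 : Ju * C2 = -(C2 * Ju) := by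
    calc Ju * C2 = P'⁻¹ * (A' * B') * P' := by rw [hJP', hC2def]; group
      _ = P'⁻¹ * (-(B' * A')) * P' := by rw [hABu']
      _ = -(P'⁻¹ * (B' * A') * P') := by rw [mul_neg, neg_mul]
      _ = -(C2 * Ju) := neg_inj.mpr (by rw [hC2def, hJP']; group)
  have hanti1v : !![(0:F),-1;1,0] * (C1 : M2) = -((C1 : M2) * !![(0:F),-1;1,0]) := by
    have := congrArg Units.val hanti1
    simp only [Units.val_mul, Units.val_neg] at this
    exact this
  have hanti2v : !![(0:F),-1;1,0] * (C2 : M2) = -((C2 : M2) * !![(0:F),-1;1,0]) := by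
    have := congrArg Units.val hanti2
    simp only [Units.val_mul, Units.val_neg] at this
    exact this
  obtain ⟨hform1, hn1⟩ := anticomm_form hC1sq hanti1v
  obtain ⟨hform2, hn2⟩ := anticomm_form hC2sq hanti2v
  obtain ⟨g, hgdet, hgJ, hgC⟩ := rotation_conj h2 hn1 hn2
  have hgu : IsUnit g := (Matrix.isUnit_iff_isUnit_det g).mpr (isUnit_iff_ne_zero.mpr hgdet)
  have hguJ : hgu.unit * Ju = Ju * hgu.unit := by
    apply Units.ext
    simp only [Units.val_mul, IsUnit.unit_spec]
    exact hgJ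
  have hguC : hgu.unit * C1 = C2 * hgu.unit := by
    apply Units.ext
    simp only [Units.val_mul, IsUnit.unit_spec]
    rw [hform1, hform2]
    exact hgC
  have hA_eq : A = P * Ju * P⁻¹ := by rw [← hP]; group
  have hA'_eq : A' = P' * Ju * P'⁻¹ := by rw [← hP']; group
  have hB_eq : B = P * C1 * P⁻¹ := by rw [hC1def]; group
  have hB'_eq : B' = P' * C2 * P'⁻¹ := by rw [hC2def]; group
  have hconjJ : hgu.unit * Ju * hgu.unit⁻¹ = Ju := by rw [hguJ]; group
  have hconjC : hgu.unit * C1 * hgu.unit⁻¹ = C2 := by rw [hguC]; group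
  refine ⟨P' * hgu.unit * P⁻¹, ?_, ?_⟩
  · calc P' * hgu.unit * P⁻¹ * A * (P' * hgu.unit * P⁻¹)⁻¹
        = P' * (hgu.unit * Ju * hgu.unit⁻¹) * P'⁻¹ := by rw [hA_eq]; group
      _ = A' := by rw [hconjJ, ← hA'_eq]
  · calc P' * hgu.unit * P⁻¹ * B * (P' * hgu.unit * P⁻¹)⁻¹
        = P' * (hgu.unit * C1 * hgu.unit⁻¹) * P'⁻¹ := by rw [hB_eq]; group
      _ = B' := by rw [hconjC, ← hB'_eq]

lemma comm_of_exp_two {G : Type*} [Group G] {x y : G} (hx : x * x = 1) (hy : y * y = 1)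
    (hxy : (x * y) * (x * y) = 1) : x * y = y * x := by
  have h1 : (x * y)⁻¹ = x * y := inv_eq_of_mul_eq_one_right hxy
  have h2 : x⁻¹ = x := inv_eq_of_mul_eq_one_right hx
  have h3 : y⁻¹ = y := inv_eq_of_mul_eq_one_right hy
  calc x * y = (x * y)⁻¹ := h1.symm
    _ = y⁻¹ * x⁻¹ := mul_inv_rev x y
    _ = y * x := by rw [h2, h3]

lemma sq_neg_one (h2 : (2:F) ≠ 0) {U : GL (Fin 2) F} (hdet : ((U : M2)).det = 1)
    (hsq : pmk U * pmk U = 1) (hU1 : pmk U ≠ 1) : (U : M2) * U = -1 := by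
  have h1 : pmk (U * U) = 1 := by rw [_root_.map_mul]; exact hsq
  have hc : U * U ∈ Subgroup.center (GL (Fin 2) F) := by
    rwa [QuotientGroup.mk'_apply, QuotientGroup.eq_one_iff] at h1
  obtain ⟨t, ht⟩ := scalar_of_center hc
  rw [Units.val_mul] at ht
  have hdt : t * t = 1 := by
    have hd := congrArg Matrix.det ht
    rw [Matrix.det_mul, hdet, Matrix.det_smul, Matrix.det_one] at hd
    simp [Fintype.card_fin] at hd
    linear_combination -hd
  rcases mul_self_eq_one_iff.mp hdt with h | h
  · exfalso
    rw [h, one_smul] at ht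
    obtain ⟨s, hs⟩ := invol_scalar h2 hdet ht
    exact hU1 (pmk_eq_one_of_scalar s hs)
  · rw [ht, h, neg_smul, one_smul]

lemma anticomm_of_pgl (h2 : (2:F) ≠ 0) {U V : GL (Fin 2) F}
    (hU : (U : M2) * U = -1) (hV : (V : M2) * V = -1)
    (hdU : ((U : M2)).det = 1) (hdV : ((V : M2)).det = 1)
    (hcomm : pmk (U * V) = pmk (V * U)) (hne : pmk U ≠ pmk V)
    (hU1 : pmk U ≠ 1) (hV1 : pmk V ≠ 1) :
    (U : M2) * V = -((V : M2) * U) := by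
  obtain ⟨t, ht⟩ := scalar_of_pmk_eq hcomm
  simp only [Units.val_mul] at ht
  have hdt : t * t = 1 := by
    have hd := congrArg Matrix.det ht
    rw [Matrix.det_smul, Matrix.det_mul, Matrix.det_mul, hdU, hdV] at hd
    simp [Fintype.card_fin] at hd
    linear_combination -hd
  rcases mul_self_eq_one_iff.mp hdt with h1 | h1
  · exfalso
    rw [h1, one_smul] at ht
    have nsU : ∀ s : F, (U : M2) ≠ s • 1 := fun s hs => hU1 (pmk_eq_one_of_scalar s hs)
    have nsV : ∀ s : F, (V : M2) ≠ s • 1 := fun s hs => hV1 (pmk_eq_one_of_scalar s hs)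
    obtain ⟨htrU, hnU⟩ := tr0 hU nsU
    obtain ⟨htrV, hnV⟩ := tr0 hV nsV
    set a := (U : M2) 0 0 with hadef
    set b := (U : M2) 0 1 with hbdef
    set c := (U : M2) 1 0 with hcdef
    set e := (V : M2) 0 0 with hedef
    set f := (V : M2) 0 1 with hfdef
    set g := (V : M2) 1 0 with hgdef
    have hUe : (U : M2) = !![a, b; c, -a] := by
      conv_lhs => rw [Matrix.eta_fin_two (U : M2)]
      rw [htrU]
    have hVe : (V : M2) = !![e, f; g, -e] := by
      conv_lhs => rw [Matrix.eta_fin_two (V : M2)]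
      rw [htrV]
    rw [hUe, hVe] at ht
    obtain ⟨s, hs⟩ := comm_scalar_entries h2 hnU ht.symm
    refine hne (pmk_eq_of_scalar s ?_)
    rw [hUe, hVe]
    exact hs
  · rw [h1, neg_smul, one_smul] at ht
    rw [ht, neg_neg]

/-- `PGL(n, p)`: the projective general linear group of degree `n` over `ZMod p`. -/
abbrev PGL (n p : ℕ) : Type :=
  GL (Fin n) (ZMod p) ⧸ Subgroup.center (GL (Fin n) (ZMod p))

/-- The copy of `PSL(2,p)` inside `PGL(2,p)`: the image of `SL(2,p)` in the quotient
of `GL(2,p)` by its center. -/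
def pslInPGL (p : ℕ) : Subgroup (PGL 2 p) :=
  ((QuotientGroup.mk' (Subgroup.center (GL (Fin 2) (ZMod p)))).comp
    Matrix.SpecialLinearGroup.toGL).range

/-- For a prime `p ≡ ±1 (mod 8)`, any two Klein four-subgroups of `PSL(2,p)` are
conjugate in `PGL(2,p)`. -/
theorem statement8 (p : ℕ) (hp : p.Prime) (hpm : p % 8 = 1 ∨ p % 8 = 7)
    (T₁ T₂ : Subgroup (PGL 2 p)) (hT₁K : T₁ ≤ pslInPGL p) (hT₂K : T₂ ≤ pslInPGL p)
    (hT₁card : Nat.card T₁ = 4) (hT₁elem : ∀ x ∈ T₁, x * x = 1)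
    (hT₂card : Nat.card T₂ = 4) (hT₂elem : ∀ x ∈ T₂, x * x = 1) :
    ∃ g : PGL 2 p, T₁.map (MulAut.conj g).toMonoidHom = T₂ := by
  haveI : Fact p.Prime := ⟨hp⟩
  set F := ZMod p
  have hp2 : p ≠ 2 := by rintro rfl; omega
  have h2 : (2 : F) ≠ 0 := by
    intro h
    have h' : ((2 : ℕ) : F) = 0 := by push_cast; exact h
    rw [CharP.cast_eq_zero_iff F p 2] at h'
    exact hp2 ((Nat.prime_dvd_prime_iff_eq hp Nat.prime_two).mp h')
  -- generators
  obtain ⟨x₁, y₁, hx₁T, hy₁T, hx₁1, hy₁1, hx₁y₁, hT₁eq⟩ := gen2 T₁ hT₁card hT₁elem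
  obtain ⟨x₂, y₂, hx₂T, hy₂T, hx₂1, hy₂1, hx₂y₂, hT₂eq⟩ := gen2 T₂ hT₂card hT₂elem
  -- lifts
  have lift : ∀ z : PGL 2 p, z ∈ pslInPGL p →
      ∃ U : GL (Fin 2) F, ((U : Matrix (Fin 2) (Fin 2) F)).det = 1 ∧
        QuotientGroup.mk' (Subgroup.center (GL (Fin 2) F)) U = z := by
    intro z hz
    simp only [pslInPGL, MonoidHom.mem_range, MonoidHom.comp_apply] at hz
    obtain ⟨S, hS⟩ := hz
    exact ⟨Matrix.SpecialLinearGroup.toGL S, S.prop, hS⟩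
  obtain ⟨Ux, hdUx, hUx⟩ := lift x₁ (hT₁K hx₁T)
  obtain ⟨Uy, hdUy, hUy⟩ := lift y₁ (hT₁K hy₁T)
  obtain ⟨Vx, hdVx, hVx⟩ := lift x₂ (hT₂K hx₂T)
  obtain ⟨Vy, hdVy, hVy⟩ := lift y₂ (hT₂K hy₂T)
  -- squares are -1
  have hUx2 : (Ux : Matrix (Fin 2) (Fin 2) F) * Ux = -1 :=
    sq_neg_one h2 hdUx (by rw [hUx]; exact hT₁elem x₁ hx₁T) (by rw [hUx]; exact hx₁1)
  have hUy2 : (Uy : Matrix (Fin 2) (Fin 2) F) * Uy = -1 :=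
    sq_neg_one h2 hdUy (by rw [hUy]; exact hT₁elem y₁ hy₁T) (by rw [hUy]; exact hy₁1)
  have hVx2 : (Vx : Matrix (Fin 2) (Fin 2) F) * Vx = -1 :=
    sq_neg_one h2 hdVx (by rw [hVx]; exact hT₂elem x₂ hx₂T) (by rw [hVx]; exact hx₂1)
  have hVy2 : (Vy : Matrix (Fin 2) (Fin 2) F) * Vy = -1 :=
    sq_neg_one h2 hdVy (by rw [hVy]; exact hT₂elem y₂ hy₂T) (by rw [hVy]; exact hy₂1)
  -- anticommutation
  have hcomm1 : x₁ * y₁ = y₁ * x₁ :=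
    comm_of_exp_two (hT₁elem x₁ hx₁T) (hT₁elem y₁ hy₁T)
      (hT₁elem _ (mul_mem hx₁T hy₁T))
  have hcomm2 : x₂ * y₂ = y₂ * x₂ :=
    comm_of_exp_two (hT₂elem x₂ hx₂T) (hT₂elem y₂ hy₂T)
      (hT₂elem _ (mul_mem hx₂T hy₂T))
  have hanti1 : (Ux : Matrix (Fin 2) (Fin 2) F) * Uy =
      -((Uy : Matrix (Fin 2) (Fin 2) F) * Ux) := by
    refine anticomm_of_pgl h2 hUx2 hUy2 hdUx hdUy ?_ ?_ ?_ ?_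
    · rw [_root_.map_mul, _root_.map_mul, hUx, hUy]; exact hcomm1
    · rw [hUx, hUy]; exact hx₁y₁
    · rw [hUx]; exact hx₁1
    · rw [hUy]; exact hy₁1
  have hanti2 : (Vx : Matrix (Fin 2) (Fin 2) F) * Vy =
      -((Vy : Matrix (Fin 2) (Fin 2) F) * Vx) := by
    refine anticomm_of_pgl h2 hVx2 hVy2 hdVx hdVy ?_ ?_ ?_ ?_
    · rw [_root_.map_mul, _root_.map_mul, hVx, hVy]; exact hcomm2
    · rw [hVx, hVy]; exact hx₂y₂
    · rw [hVx]; exact hx₂1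
    · rw [hVy]; exact hy₂1
  -- the conjugating unit
  obtain ⟨G, hGx, hGy⟩ := conj_units h2 hUx2 hUy2 hanti1 hVx2 hVy2 hanti2
  set φ := QuotientGroup.mk' (Subgroup.center (GL (Fin 2) F))
  refine ⟨φ G, ?_⟩
  have hφx : (MulAut.conj (φ G)).toMonoidHom x₁ = x₂ := by
    simp only [MulEquiv.coe_toMonoidHom, MulAut.conj_apply]
    rw [← hUx, ← hVx, ← map_inv, ← _root_.map_mul, ← _root_.map_mul, hGx]
  have hφy : (MulAut.conj (φ G)).toMonoidHom y₁ = y₂ := by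
    simp only [MulEquiv.coe_toMonoidHom, MulAut.conj_apply]
    rw [← hUy, ← hVy, ← map_inv, ← _root_.map_mul, ← _root_.map_mul, hGy]
  rw [hT₁eq, MonoidHom.map_closure, Set.image_pair, hφx, hφy, ← hT₂eq]
end

section
/- Let p be a prime with p ≡ ±1 (mod 8), let K = PSL(2,p) regarded as a normal subgroup of G = PGL(2,p), and let T be a Klein four-subgroup of K. Then the normalizer N_G(T) of T in G has order 24. -/
namespace Statement9Aux
set_option linter.unusedSectionVars false

open Matrix

/-! ### Group-theoretic helpers -/

section GroupHelpers

variable {G : Type*} [Group G]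

/-- conjugation action of the normalizer on nontrivial elements of `T` -/
def conjPermHom (T : Subgroup G) :
    (Subgroup.normalizer (T : Set G)) →* Equiv.Perm {x : G // x ∈ T ∧ x ≠ 1} where
  toFun n :=
    { toFun := fun x => ⟨(n:G) * x * (n:G)⁻¹,
        (Subgroup.mem_normalizer_iff.mp n.2 x).mp x.2.1,
        by
          intro h
          apply x.2.2
          have := congrArg (fun y => (n:G)⁻¹ * y * (n:G)) h
          simpa [mul_assoc] using this⟩
      invFun := fun x => ⟨(n:G)⁻¹ * x * (n:G),
        by
          have hm := (Subgroup.mem_normalizer_iff.mp n.2 ((n:G)⁻¹ * x * (n:G))).mpr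
          apply hm
          simpa [mul_assoc] using x.2.1,
        by
          intro h
          apply x.2.2
          have := congrArg (fun y => (n:G) * y * (n:G)⁻¹) h
          simpa [mul_assoc] using this⟩
      left_inv := fun x => by ext; simp [mul_assoc]
      right_inv := fun x => by ext; simp [mul_assoc] }
  map_one' := by ext x; simp
  map_mul' n m := by ext x; simp [mul_assoc]

lemma conjPermHom_apply (T : Subgroup G) (n : (Subgroup.normalizer (T : Set G))) (x) :
    (conjPermHom T n x : G) = (n:G) * x * (n:G)⁻¹ := rfl

lemma mem_normalizer_of_conj {T : Subgroup G} {g : G}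
    (h : ∀ x, x ∈ T → g * x * g⁻¹ ∈ T) (h' : ∀ x, x ∈ T → g⁻¹ * x * g ∈ T) :
    g ∈ (Subgroup.normalizer (T : Set G)) := by
  rw [Subgroup.mem_normalizer_iff]
  intro x
  constructor
  · exact h x
  · intro hx
    have := h' _ hx
    simpa [mul_assoc] using this

lemma klein_comm {T : Subgroup G} (hTelem : ∀ x ∈ T, x * x = 1)
    {x y : G} (hx : x ∈ T) (hy : y ∈ T) : x * y = y * x := by
  have hxy := hTelem _ (T.mul_mem hx hy)
  have h1 : (x*y)⁻¹ = x*y := inv_eq_of_mul_eq_one_right hxy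
  have h2 : x⁻¹ = x := inv_eq_of_mul_eq_one_right (hTelem _ hx)
  have h3 : y⁻¹ = y := inv_eq_of_mul_eq_one_right (hTelem _ hy)
  calc x * y = (x*y)⁻¹ := h1.symm
  _ = y * x := by rw [_root_.mul_inv_rev, h2, h3]

end GroupHelpers

/-! ### 2×2 matrix computations over a field -/

section MatrixHelpers

variable {F : Type*} [Field F]

lemma aux_entries (A : Matrix (Fin 2) (Fin 2) F) :
    A * A = !![A 0 0 * A 0 0 + A 0 1 * A 1 0, A 0 0 * A 0 1 + A 0 1 * A 1 1;
               A 1 0 * A 0 0 + A 1 1 * A 1 0, A 1 0 * A 0 1 + A 1 1 * A 1 1] := by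
  rw [Matrix.eta_fin_two A]; simp

/-- trace zero from square = -1 and det 1 -/
lemma aux_trace_zero (A : Matrix (Fin 2) (Fin 2) F) (h : A * A = -1) (hd : A.det = 1) :
    A 1 1 = - A 0 0 := by
  set a := A 0 0; set b := A 0 1; set c := A 1 0; set d := A 1 1
  rw [Matrix.det_fin_two] at hd
  rw [aux_entries] at h
  have e1 : a*a+b*c = -1 := by have := congrFun (congrFun h 0) 0; simpa using this
  have e4 : c*b+d*d = -1 := by have := congrFun (congrFun h 1) 1; simpa using this
  have key : (a + d) * (a + d) = 0 := by linear_combination e1 + e4 + 2*hd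
  have h0 := mul_self_eq_zero.mp key
  linear_combination h0

/-- square = 1, det 1, char ≠ 2 implies ±1 -/
lemma aux_pm_one (h2 : (2:F) ≠ 0) (A : Matrix (Fin 2) (Fin 2) F)
    (h : A * A = 1) (hd : A.det = 1) : A = 1 ∨ A = -1 := by
  set a := A 0 0 with ha'; set b := A 0 1 with hb'; set c := A 1 0 with hc'; set d := A 1 1 with hd'
  rw [Matrix.det_fin_two] at hd
  rw [aux_entries] at h
  have e1 : a*a+b*c = 1 := by have := congrFun (congrFun h 0) 0; simpa using this
  have e2 : a*b+b*d = 0 := by have := congrFun (congrFun h 0) 1; simpa using this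
  have e3 : c*a+d*c = 0 := by have := congrFun (congrFun h 1) 0; simpa using this
  have had : a + d ≠ 0 := by
    intro h0
    apply h2
    linear_combination -e1 - hd + a * h0
  have hb : b = 0 := by
    have : b * (a + d) = 0 := by linear_combination e2
    rcases mul_eq_zero.mp this with h' | h'
    · exact h'
    · exact absurd h' had
  have hc : c = 0 := by
    have : c * (a + d) = 0 := by linear_combination e3
    rcases mul_eq_zero.mp this with h' | h'
    · exact h'
    · exact absurd h' had
  have e1' : a * a = 1 := by linear_combination e1 - c * hb
  have hda : d = a := by
    have hd2 : a * d = 1 := by linear_combination hd + c * hb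
    linear_combination -d*e1' + a*hd2
  have hA : A = !![a, b; c, d] := Matrix.eta_fin_two A
  rcases mul_self_eq_one_iff.mp e1' with h1 | h1
  · left; rw [hA, hb, hc, hda, h1]; exact (Matrix.one_fin_two).symm
  · right; rw [hA, hb, hc, hda, h1]
    rw [show (-1 : Matrix (Fin 2) (Fin 2) F) = -(!![1,0;0,1]) from by rw [← Matrix.one_fin_two]]
    simp

/-- Trace-zero 2x2 matrices: XY + YX = tr(XY) • 1 -/
lemma aux_anticomm_id (X Y : Matrix (Fin 2) (Fin 2) F)
    (hX : X 1 1 = - X 0 0) (hY : Y 1 1 = - Y 0 0) :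
    X * Y + Y * X = (X * Y).trace • 1 := by
  rw [Matrix.eta_fin_two X, Matrix.eta_fin_two Y, hX, hY]
  ext i j
  fin_cases i <;> fin_cases j <;>
    simp [Matrix.mul_fin_two, Matrix.trace_fin_two, Matrix.one_apply, Matrix.smul_apply] <;> ring

section Quat
variable {A B : Matrix (Fin 2) (Fin 2) F}
  (hA : A * A = -1) (hB : B * B = -1) (hBA : B * A = -(A * B))

include hA hB hBA
omit hB hBA in
lemma q_hA' : ∀ X, A*(A*X) = -X := by
  intro X; rw [← mul_assoc, hA, neg_one_mul]
omit hA hBA in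
lemma q_hB' : ∀ X, B*(B*X) = -X := by
  intro X; rw [← mul_assoc, hB, neg_one_mul]
omit hA hB in
lemma q_hBA' : ∀ X, B*(A*X) = -(A*(B*X)) := by
  intro X; rw [← mul_assoc, hBA, neg_mul, mul_assoc]

lemma q_RR : (A + B) * (A + B) = (-2 : F) • (1 : Matrix (Fin 2) (Fin 2) F) := by
  simp only [mul_add, add_mul, mul_neg, neg_mul, neg_neg, mul_one, one_mul, mul_assoc,
    q_hA' hA, q_hB' hB, q_hBA' hBA, hA, hB, hBA]
  module

lemma q_RA : (A + B) * A = B * (A + B) := by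
  simp only [mul_add, add_mul, mul_neg, neg_mul, neg_neg, mul_one, one_mul, mul_assoc,
    q_hA' hA, q_hB' hB, q_hBA' hBA, hA, hB, hBA]
  abel

lemma q_RB : (A + B) * B = A * (A + B) := by
  simp only [mul_add, add_mul, mul_neg, neg_mul, neg_neg, mul_one, one_mul, mul_assoc,
    q_hA' hA, q_hB' hB, q_hBA' hBA, hA, hB, hBA]
  abel

lemma q_RAB : (A + B) * (A * B) = (-1 : F) • ((A * B) * (A + B)) := by
  simp only [mul_add, add_mul, mul_neg, neg_mul, neg_neg, mul_one, one_mul, mul_assoc,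
    q_hA' hA, q_hB' hB, q_hBA' hBA, hA, hB, hBA]
  module

lemma q_ABAB : (A * B) * (A * B) = -1 := by
  simp only [mul_add, add_mul, mul_neg, neg_mul, neg_neg, mul_one, one_mul, mul_assoc,
    q_hA' hA, q_hB' hB, q_hBA' hBA, hA, hB, hBA]

lemma q_ABBA : (A * B) * (B * A) = 1 := by
  simp only [mul_add, add_mul, mul_neg, neg_mul, neg_neg, mul_one, one_mul, mul_assoc,
    q_hA' hA, q_hB' hB, q_hBA' hBA, hA, hB, hBA]

lemma q_CA : (1 + A + B + A*B) * A = B * (1 + A + B + A*B) := by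
  simp only [mul_add, add_mul, mul_neg, neg_mul, neg_neg, mul_one, one_mul, mul_assoc,
    q_hA' hA, q_hB' hB, q_hBA' hBA, hA, hB, hBA]
  abel

lemma q_CB : (1 + A + B + A*B) * B = (A*B) * (1 + A + B + A*B) := by
  simp only [mul_add, add_mul, mul_neg, neg_mul, neg_neg, mul_one, one_mul, mul_assoc,
    q_hA' hA, q_hB' hB, q_hBA' hBA, hA, hB, hBA]
  abel

lemma q_CAB : (1 + A + B + A*B) * (A*B) = A * (1 + A + B + A*B) := by
  simp only [mul_add, add_mul, mul_neg, neg_mul, neg_neg, mul_one, one_mul, mul_assoc,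
    q_hA' hA, q_hB' hB, q_hBA' hBA, hA, hB, hBA]
  abel

lemma q_CC : (1 + A + B + A*B) * (1 + A + B + A*B)
    = (2 : F) • (1 + A + B + A*B) - (4 : F) • (1 : Matrix (Fin 2) (Fin 2) F) := by
  simp only [mul_add, add_mul, mul_neg, neg_mul, neg_neg, mul_one, one_mul, mul_assoc,
    q_hA' hA, q_hB' hB, q_hBA' hBA, hA, hB, hBA]
  module

end Quat

/-- M commuting with A lies in the span of 1, A -/
lemma q_comm_span (h2 : (2:F) ≠ 0) {A : Matrix (Fin 2) (Fin 2) F}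
    (hA : A * A = -1) (hdA : A.det = 1) (M : Matrix (Fin 2) (Fin 2) F)
    (hMA : M * A = A * M) : ∃ α β : F, M = α • 1 + β • A := by
  set α : F := (2:F)⁻¹ * (M 0 0 + M 1 1) with hα
  set X : Matrix (Fin 2) (Fin 2) F := M - α • 1 with hXdef
  have hXtr : X 1 1 = - X 0 0 := by
    simp only [hXdef, Matrix.sub_apply, Matrix.smul_apply, Matrix.one_apply_eq,
      Matrix.one_apply_ne (by decide : (1:Fin 2) ≠ 0), smul_eq_mul, hα]
    field_simp
    ring
  have hAtr : A 1 1 = - A 0 0 := aux_trace_zero A hA hdA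
  have hXA : X * A = A * X := by
    simp only [hXdef, sub_mul, mul_sub, smul_mul_assoc, mul_smul_comm, one_mul, mul_one, hMA]
  have hid := aux_anticomm_id X A hXtr hAtr
  obtain ⟨t, ht⟩ : ∃ t : F, X * A = t • 1 := by
    refine ⟨(2:F)⁻¹ * (X*A).trace, ?_⟩
    have h2' : (2:F) • (X*A) = (X*A).trace • 1 := by
      rw [two_smul]; nth_rewrite 2 [hXA]; exact hid
    calc X*A = (2:F)⁻¹ • ((2:F) • (X*A)) := by
          rw [smul_smul, inv_mul_cancel₀ h2, one_smul]
    _ = ((2:F)⁻¹ * (X*A).trace) • 1 := by rw [h2', smul_smul]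
  have hAnA : A * -A = 1 := by rw [mul_neg, hA, neg_neg]
  have hXval : X = (-t) • A := by
    calc X = X * (A * -A) := by rw [hAnA, mul_one]
    _ = (X * A) * -A := by rw [mul_assoc]
    _ = (t • 1) * -A := by rw [ht]
    _ = (-t) • A := by rw [smul_mul_assoc, one_mul, neg_smul, smul_neg]
  exact ⟨α, -t, by rw [← hXval, hXdef]; abel⟩

/-- a matrix commuting with both A and B is scalar -/
lemma q_comm_scalar (h2 : (2:F) ≠ 0) {A B : Matrix (Fin 2) (Fin 2) F}
    (hA : A * A = -1) (hB : B * B = -1) (hBA : B * A = -(A * B))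
    (hdA : A.det = 1) (M : Matrix (Fin 2) (Fin 2) F)
    (hMA : M * A = A * M) (hMB : M * B = B * M) : ∃ c : F, M = c • 1 := by
  obtain ⟨α, β, hM⟩ := q_comm_span h2 hA hdA M hMA
  have hcomm : β • (A * B) = β • (B * A) := by
    have h1 : M * B = α • B + β • (A*B) := by
      rw [hM, add_mul, smul_mul_assoc, smul_mul_assoc, one_mul]
    have h2' : B * M = α • B + β • (B*A) := by
      rw [hM, mul_add, mul_smul_comm, mul_smul_comm, mul_one]
    have := hMB
    rw [h1, h2'] at this
    exact add_left_cancel this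
  have hzero : ((2:F) * β) • (A*B) = 0 := by
    rw [hBA] at hcomm
    have hsum : β • (A*B) + β • (A*B) = 0 := by
      nth_rewrite 1 [hcomm]; simp
    calc ((2:F)*β) • (A*B) = (2:F) • β • (A*B) := by rw [smul_smul]
    _ = β • (A*B) + β • (A*B) := two_smul F _
    _ = 0 := hsum
  have hABne : (A*B) ≠ 0 := by
    intro h0
    have := q_ABBA hA hB hBA
    rw [h0, zero_mul] at this
    exact one_ne_zero this.symm
  have hβ0 : β = 0 := by
    rcases smul_eq_zero.mp hzero with h' | h'
    · rcases mul_eq_zero.mp h' with h'' | h''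
      · exact absurd h'' h2
      · exact h''
    · exact absurd h' hABne
  exact ⟨α, by rw [hM, hβ0, zero_smul, add_zero]⟩

/-- centralizer case analysis -/
lemma q_centralizer_cases (h2 : (2:F) ≠ 0) {A B : Matrix (Fin 2) (Fin 2) F}
    (hA : A * A = -1) (hB : B * B = -1) (hBA : B * A = -(A * B))
    (hdA : A.det = 1) (M : Matrix (Fin 2) (Fin 2) F)
    (hMA : M * A = A * M ∨ M * A = -(A * M))
    (hMB : M * B = B * M ∨ M * B = -(B * M)) :
    (∃ c : F, M = c • 1) ∨ (∃ c : F, M = c • A) ∨ (∃ c : F, M = c • B)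
      ∨ (∃ c : F, M = c • (A * B)) := by
  have hAnA : A * -A = 1 := by rw [mul_neg, hA, neg_neg]
  have hBnB : B * -B = 1 := by rw [mul_neg, hB, neg_neg]
  have hABBA : (A*B) * (B*A) = 1 := q_ABBA hA hB hBA
  have hAB : A * B = -(B * A) := by rw [hBA, neg_neg]
  rcases hMA with hc | hc <;> rcases hMB with hd | hd
  · exact Or.inl (q_comm_scalar h2 hA hB hBA hdA M hc hd)
  · right; left
    have k1 : (M*A) * A = A * (M*A) := by
      calc (M*A)*A = (A*M)*A := by rw [hc]
      _ = A*(M*A) := by rw [mul_assoc]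
    have k2 : (M*A) * B = B * (M*A) := by
      calc (M*A)*B = M*(A*B) := by rw [mul_assoc]
      _ = M*(-(B*A)) := by rw [← hAB]
      _ = -((M*B)*A) := by rw [mul_neg, mul_assoc]
      _ = -((-(B*M))*A) := by rw [hd]
      _ = (B*M)*A := by rw [neg_mul, neg_neg]
      _ = B*(M*A) := by rw [mul_assoc]
    obtain ⟨c, hcval⟩ := q_comm_scalar h2 hA hB hBA hdA (M*A) k1 k2
    refine ⟨-c, ?_⟩
    calc M = M * (A * -A) := by rw [hAnA, mul_one]
    _ = (M*A) * -A := by rw [mul_assoc]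
    _ = (c • 1) * -A := by rw [hcval]
    _ = (-c) • A := by rw [smul_mul_assoc, one_mul, neg_smul, smul_neg]
  · right; right; left
    have k1 : (M*B) * A = A * (M*B) := by
      calc (M*B)*A = M*(B*A) := by rw [mul_assoc]
      _ = -((M*A)*B) := by rw [hBA, mul_neg, mul_assoc]
      _ = -((-(A*M))*B) := by rw [hc]
      _ = (A*M)*B := by rw [neg_mul, neg_neg]
      _ = A*(M*B) := by rw [mul_assoc]
    have k2 : (M*B) * B = B * (M*B) := by
      calc (M*B)*B = (B*M)*B := by rw [hd]
      _ = B*(M*B) := by rw [mul_assoc]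
    obtain ⟨c, hcval⟩ := q_comm_scalar h2 hA hB hBA hdA (M*B) k1 k2
    refine ⟨-c, ?_⟩
    calc M = M * (B * -B) := by rw [hBnB, mul_one]
    _ = (M*B) * -B := by rw [mul_assoc]
    _ = (c • 1) * -B := by rw [hcval]
    _ = (-c) • B := by rw [smul_mul_assoc, one_mul, neg_smul, smul_neg]
  · right; right; right
    have hab : (A*B)*A = -(A*(A*B)) := by
      calc (A*B)*A = A*(B*A) := by rw [mul_assoc]
      _ = -(A*(A*B)) := by rw [hBA, mul_neg]
    have k1 : (M*(A*B)) * A = A * (M*(A*B)) := by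
      calc (M*(A*B))*A = M*((A*B)*A) := by rw [mul_assoc]
      _ = -(M*(A*(A*B))) := by rw [hab, mul_neg]
      _ = -((M*A)*(A*B)) := by rw [mul_assoc]
      _ = -((-(A*M))*(A*B)) := by rw [hc]
      _ = (A*M)*(A*B) := by rw [neg_mul, neg_neg]
      _ = A*(M*(A*B)) := by rw [mul_assoc]
    have k2 : (M*(A*B)) * B = B * (M*(A*B)) := by
      have lhs : (M*(A*B))*B = A*M := by
        calc (M*(A*B))*B = M*(A*(B*B)) := by rw [mul_assoc, mul_assoc]
        _ = M*(-A) := by rw [hB, mul_neg_one]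
        _ = -(M*A) := by rw [mul_neg]
        _ = A*M := by rw [hc, neg_neg]
      have rhs : B*(M*(A*B)) = A*M := by
        calc B*(M*(A*B)) = (B*M)*(A*B) := by rw [mul_assoc]
        _ = (-(M*B))*(A*B) := by rw [← neg_neg (B*M), ← hd]
        _ = -(M*(B*(A*B))) := by rw [neg_mul, mul_assoc]
        _ = -(M*((B*A)*B)) := by rw [mul_assoc]
        _ = -(M*((-(A*B))*B)) := by rw [hBA]
        _ = M*((A*B)*B) := by rw [neg_mul, mul_neg, neg_neg]
        _ = M*(A*(B*B)) := by rw [mul_assoc]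
        _ = M*(-A) := by rw [hB, mul_neg_one]
        _ = -(M*A) := by rw [mul_neg]
        _ = A*M := by rw [hc, neg_neg]
      rw [lhs, rhs]
    obtain ⟨c, hcval⟩ := q_comm_scalar h2 hA hB hBA hdA (M*(A*B)) k1 k2
    refine ⟨-c, ?_⟩
    calc M = M * ((A*B)*(B*A)) := by rw [hABBA, mul_one]
    _ = (M*(A*B)) * (B*A) := (mul_assoc _ _ _).symm
    _ = (c • 1) * (B*A) := by rw [hcval]
    _ = c • (B*A) := by rw [smul_mul_assoc, one_mul]
    _ = c • (-(A*B)) := by rw [hBA]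
    _ = (-c) • (A*B) := by rw [smul_neg, neg_smul]

end MatrixHelpers

/-! ### center of GL₂ and the quotient map -/

section CenterHelpers

variable {F : Type*} [Field F]

lemma central_of_val_scalar (u : GL (Fin 2) F) (c : F)
    (h : (u : Matrix (Fin 2) (Fin 2) F) = c • 1) :
    u ∈ Subgroup.center (GL (Fin 2) F) := by
  rw [Subgroup.mem_center_iff]
  intro g
  apply Units.ext
  show (g : Matrix (Fin 2) (Fin 2) F) * u = (u : Matrix (Fin 2) (Fin 2) F) * g
  rw [h, mul_smul_comm, smul_mul_assoc, mul_one, one_mul]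

lemma mem_center_val (Z : GL (Fin 2) F) (hZ : Z ∈ Subgroup.center (GL (Fin 2) F)) :
    ∃ c : F, c ≠ 0 ∧ (Z : Matrix (Fin 2) (Fin 2) F) = c • 1 := by
  rw [Subgroup.mem_center_iff] at hZ
  set u1 : GL (Fin 2) F := ⟨!![1,1;0,1], !![1,-1;0,1],
    by simp [Matrix.mul_fin_two, Matrix.one_fin_two],
    by simp [Matrix.mul_fin_two, Matrix.one_fin_two]⟩ with hu1
  set u2 : GL (Fin 2) F := ⟨!![1,0;1,1], !![1,0;-1,1],
    by simp [Matrix.mul_fin_two, Matrix.one_fin_two],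
    by simp [Matrix.mul_fin_two, Matrix.one_fin_two]⟩ with hu2
  have h1 := congrArg Units.val (hZ u1)
  have h2 := congrArg Units.val (hZ u2)
  simp only [Units.val_mul] at h1 h2
  set a := (Z : Matrix (Fin 2) (Fin 2) F) 0 0
  set b := (Z : Matrix (Fin 2) (Fin 2) F) 0 1
  set c := (Z : Matrix (Fin 2) (Fin 2) F) 1 0
  set d := (Z : Matrix (Fin 2) (Fin 2) F) 1 1
  have hZm : (Z : Matrix (Fin 2) (Fin 2) F) = !![a,b;c,d] := Matrix.eta_fin_two _
  rw [hZm] at h1 h2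
  have e1 := congrFun (congrFun h1 0) 0
  have e2 := congrFun (congrFun h1 0) 1
  have e3 := congrFun (congrFun h2 0) 0
  simp [hu1, Matrix.mul_fin_two] at e1 e2
  simp [hu2, Matrix.mul_fin_two] at e3
  have e1' : c = 0 := e1
  have e2' : d = a := by linear_combination e2
  have e3' : b = 0 := e3
  refine ⟨a, ?_, ?_⟩
  · intro ha0
    have hZ0 : (Z : Matrix (Fin 2) (Fin 2) F) = 0 := by
      rw [hZm, e1', e2', e3', ha0]
      ext i j; fin_cases i <;> fin_cases j <;> simp
    have := Z.val_inv
    rw [hZ0, zero_mul] at this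
    exact one_ne_zero this.symm
  · rw [hZm, e1', e2', e3', Matrix.one_fin_two]
    ext i j; fin_cases i <;> fin_cases j <;> simp

local notation "πq" => QuotientGroup.mk' (Subgroup.center (GL (Fin 2) F))

lemma pi_eq_one_of_scalar {u : GL (Fin 2) F} {c : F}
    (h : (u : Matrix (Fin 2) (Fin 2) F) = c • 1) :
    πq u = 1 := by
  rw [QuotientGroup.mk'_apply, QuotientGroup.eq_one_iff]
  exact central_of_val_scalar u c h

lemma pi_eq_of_smul {u v : GL (Fin 2) F} {c : F}
    (h : (u : Matrix (Fin 2) (Fin 2) F) = c • (v : Matrix (Fin 2) (Fin 2) F)) :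
    πq u = πq v := by
  have hc : (u * v⁻¹ : GL (Fin 2) F).val = c • 1 := by
    rw [Units.val_mul, h, smul_mul_assoc, ← Units.val_mul, mul_inv_cancel, Units.val_one]
  have h1 : πq (u * v⁻¹) = 1 := pi_eq_one_of_scalar hc
  rw [_root_.map_mul, _root_.map_inv] at h1
  exact mul_inv_eq_one.mp h1

/-- if π u = π v then u.val = c • v.val for some c ≠ 0 -/
lemma val_smul_of_pi_eq {u v : GL (Fin 2) F} (h : πq u = πq v) :
    ∃ c : F, c ≠ 0 ∧ (u : Matrix (Fin 2) (Fin 2) F) = c • (v : Matrix (Fin 2) (Fin 2) F) := by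
  have : πq (v⁻¹ * u) = 1 := by
    rw [_root_.map_mul, _root_.map_inv, h, inv_mul_cancel]
  rw [QuotientGroup.mk'_apply, QuotientGroup.eq_one_iff] at this
  obtain ⟨c, hc, hval⟩ := mem_center_val _ this
  refine ⟨c, hc, ?_⟩
  have h2 : (u : Matrix (Fin 2) (Fin 2) F) = (v : Matrix (Fin 2) (Fin 2) F) * (c • 1) := by
    calc (u : Matrix (Fin 2) (Fin 2) F)
        = ((v * (v⁻¹ * u) : GL (Fin 2) F) : Matrix (Fin 2) (Fin 2) F) := by
          rw [show (v * (v⁻¹ * u) : GL (Fin 2) F) = u by group]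
    _ = (v : Matrix (Fin 2) (Fin 2) F) * ((v⁻¹ * u : GL (Fin 2) F) : Matrix (Fin 2) (Fin 2) F) :=
          Units.val_mul _ _
    _ = (v : Matrix (Fin 2) (Fin 2) F) * (c • 1) := by rw [hval]
  rw [h2, mul_smul_comm, mul_one]

lemma val_sq_neg_one (h2 : (2:F) ≠ 0) {u : GL (Fin 2) F}
    (hdet : (u : Matrix (Fin 2) (Fin 2) F).det = 1)
    (hsq : πq u * πq u = 1) (hne : πq u ≠ 1) :
    (u : Matrix (Fin 2) (Fin 2) F) * (u : Matrix (Fin 2) (Fin 2) F) = -1 := by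
  have h1 : πq (u*u) = 1 := by rw [_root_.map_mul]; exact hsq
  rw [QuotientGroup.mk'_apply, QuotientGroup.eq_one_iff] at h1
  obtain ⟨c, hc0, hval⟩ := mem_center_val _ h1
  rw [Units.val_mul] at hval
  have hdet2 : c * c = 1 := by
    have hd := congrArg Matrix.det hval
    rw [Matrix.det_mul, hdet, Matrix.det_smul, Matrix.det_one] at hd
    simp only [Fintype.card_fin, mul_one, one_mul] at hd
    linear_combination -hd
  rcases mul_self_eq_one_iff.mp hdet2 with h | h
  · exfalso
    rw [h, one_smul] at hval
    rcases aux_pm_one h2 _ hval hdet with h' | h'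
    · exact hne (pi_eq_one_of_scalar (c := 1) (by rw [h', one_smul]))
    · exact hne (pi_eq_one_of_scalar (c := -1) (by rw [h', neg_smul, one_smul]))
  · rw [h] at hval; rw [hval, neg_smul, one_smul]

lemma val_anticomm (h2 : (2:F) ≠ 0) {u v : GL (Fin 2) F}
    (hdu : (u : Matrix (Fin 2) (Fin 2) F).det = 1)
    (hdv : (v : Matrix (Fin 2) (Fin 2) F).det = 1)
    (huu : (u : Matrix (Fin 2) (Fin 2) F) * u = -1)
    (hvv : (v : Matrix (Fin 2) (Fin 2) F) * v = -1)
    (hcomm : πq u * πq v = πq v * πq u)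
    (hneu : πq u ≠ 1) (hnev : πq v ≠ 1) (hne : πq u ≠ πq v) :
    (v : Matrix (Fin 2) (Fin 2) F) * u = -((u : Matrix (Fin 2) (Fin 2) F) * v) := by
  have h1 : πq (u*v) = πq (v*u) := by
    rw [_root_.map_mul, _root_.map_mul]; exact hcomm
  obtain ⟨c, hc0, hval⟩ := val_smul_of_pi_eq h1
  rw [Units.val_mul, Units.val_mul] at hval
  have hc2 : c * c = 1 := by
    have hd := congrArg Matrix.det hval
    rw [Matrix.det_mul, Matrix.det_smul, Matrix.det_mul, hdu, hdv] at hd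
    simp only [Fintype.card_fin, mul_one, one_mul] at hd
    linear_combination -hd
  rcases mul_self_eq_one_iff.mp hc2 with h | h
  · exfalso
    rw [h, one_smul] at hval
    obtain ⟨α, β, hBspan⟩ := q_comm_span h2 huu hdu (v : Matrix (Fin 2) (Fin 2) F) hval.symm
    have expand : (v : Matrix (Fin 2) (Fin 2) F) * v
        = (α*α - β*β) • (1 : Matrix (Fin 2) (Fin 2) F) + ((2:F)*α*β) • u.val := by
      simp only [hBspan, add_mul, mul_add, smul_mul_smul_comm, one_mul, mul_one, huu]
      module
    have key : (((2:F)*α*β)) • (u : Matrix (Fin 2) (Fin 2) F)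
        = (β*β - α*α - 1) • (1 : Matrix (Fin 2) (Fin 2) F) := by
      calc ((2:F)*α*β) • (u : Matrix (Fin 2) (Fin 2) F)
          = ((α*α-β*β) • (1 : Matrix (Fin 2) (Fin 2) F) + ((2:F)*α*β) • u.val)
            - (α*α-β*β) • (1 : Matrix (Fin 2) (Fin 2) F) := by module
      _ = -1 - (α*α-β*β) • (1 : Matrix (Fin 2) (Fin 2) F) := by rw [← expand, hvv]
      _ = (β*β - α*α - 1) • (1 : Matrix (Fin 2) (Fin 2) F) := by module
    by_cases h0 : (2:F)*α*β = 0
    · rcases mul_eq_zero.mp h0 with h0' | h0'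
      · rcases mul_eq_zero.mp h0' with h0'' | h0''
        · exact h2 h0''
        · -- α = 0 : v = β • u
          apply hne
          symm
          apply pi_eq_of_smul (c := β)
          rw [hBspan, h0'', zero_smul, zero_add]
      · -- β = 0 : v scalar
        apply hnev
        apply pi_eq_one_of_scalar (c := α)
        rw [hBspan, h0', zero_smul, add_zero]
    · apply hneu
      apply pi_eq_one_of_scalar (c := ((2:F)*α*β)⁻¹ * (β*β - α*α - 1))
      calc (u : Matrix (Fin 2) (Fin 2) F)
          = ((2:F)*α*β)⁻¹ • (((2:F)*α*β) • (u : Matrix (Fin 2) (Fin 2) F)) := by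
            rw [smul_smul, inv_mul_cancel₀ h0, one_smul]
      _ = ((2:F)*α*β)⁻¹ • ((β*β - α*α - 1) • (1 : Matrix (Fin 2) (Fin 2) F)) := by rw [key]
      _ = (((2:F)*α*β)⁻¹ * (β*β - α*α - 1)) • 1 := by rw [smul_smul]
  · rw [h] at hval
    rw [neg_smul, one_smul] at hval
    rw [hval, neg_neg]

end CenterHelpers

end Statement9Aux

open Statement9Aux

set_option maxHeartbeats 2000000 in
/-- For a prime `p ≡ ±1 (mod 8)` and a Klein four-subgroup `T` of `PSL(2,p)`,
the normalizer of `T` in `PGL(2,p)` has order `24`. -/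
theorem statement9 (p : ℕ) (hp : p.Prime) (hpm : p % 8 = 1 ∨ p % 8 = 7)
    (T : Subgroup (PGL 2 p)) (hTK : T ≤ pslInPGL p)
    (hTcard : Nat.card T = 4) (hTelem : ∀ x ∈ T, x * x = 1) :
    Nat.card (Subgroup.normalizer (T : Set (PGL 2 p))) = 24 := by
  classical
  haveI hfact : Fact p.Prime := ⟨hp⟩
  have hodd : p % 2 = 1 := by
    have h82 : p % 2 = p % 8 % 2 := (Nat.mod_mod_of_dvd p (by norm_num)).symm
    omega
  have h2 : (2 : ZMod p) ≠ 0 := by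
    intro h
    have h2' : ((2:ℕ) : ZMod p) = 0 := by exact_mod_cast h
    rw [ZMod.natCast_eq_zero_iff] at h2'
    have := (Nat.prime_dvd_prime_iff_eq hp Nat.prime_two).mp h2'
    omega
  have hm2 : (-2 : ZMod p) ≠ 0 := neg_ne_zero.mpr h2
  have h4 : (4 : ZMod p) ≠ 0 := by
    have : (4 : ZMod p) = 2 * 2 := by norm_num
    rw [this]
    exact mul_ne_zero h2 h2
  -- cardinality of T as a set
  have hTset : (T : Set (PGL 2 p)).ncard = 4 := by
    rw [← Nat.card_coe_set_eq]
    exact hTcard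
  have hTfin : (T : Set (PGL 2 p)).Finite := by
    apply Set.finite_of_ncard_ne_zero
    rw [hTset]; norm_num
  -- pick two distinct nontrivial elements
  obtain ⟨s, hsT, hs1⟩ : ∃ s ∈ T, s ≠ (1 : PGL 2 p) := by
    by_contra hcon
    push_neg at hcon
    have hsub : (T : Set (PGL 2 p)) ⊆ {1} := fun x hx => hcon x hx
    have := Set.ncard_le_ncard hsub (Set.finite_singleton 1)
    rw [hTset, Set.ncard_singleton] at this
    omega
  obtain ⟨t, htT, ht1, hts⟩ : ∃ t ∈ T, t ≠ (1 : PGL 2 p) ∧ t ≠ s := by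
    by_contra hcon
    push_neg at hcon
    have hsub : (T : Set (PGL 2 p)) ⊆ {1, s} := by
      intro x hx
      by_cases hx1 : x = 1
      · exact Or.inl hx1
      · exact Or.inr (hcon x hx hx1)
    have hc1 := Set.ncard_le_ncard hsub ((Set.finite_singleton s).insert 1)
    have hle := Set.ncard_insert_le (1 : PGL 2 p) {s}
    rw [Set.ncard_singleton] at hle
    rw [hTset] at hc1
    omega
  have hss : s * s = 1 := hTelem s hsT
  have htt : t * t = 1 := hTelem t htT
  have hstT : s * t ∈ T := T.mul_mem hsT htT
  have hstst : (s*t) * (s*t) = 1 := hTelem _ hstT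
  have hst1 : s * t ≠ 1 := by
    intro h
    apply hts
    calc t = s⁻¹ * (s * t) := by rw [← mul_assoc, inv_mul_cancel, one_mul]
    _ = s⁻¹ := by rw [h, mul_one]
    _ = s := inv_eq_of_mul_eq_one_right hss
  have hsts : s * t ≠ s := by
    intro h
    apply ht1
    have := congrArg (fun y => s⁻¹ * y) h
    simpa [← mul_assoc, inv_mul_cancel] using this
  have hstt : s * t ≠ t := by
    intro h
    apply hs1
    have := congrArg (fun y => y * t⁻¹) h
    simpa [mul_assoc] using this
  -- carrier of T
  have hVsub : ({1, s, t, s*t} : Set (PGL 2 p)) ⊆ (T : Set (PGL 2 p)) := by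
    intro x hx
    rcases hx with rfl | rfl | rfl | rfl
    · exact T.one_mem
    · exact hsT
    · exact htT
    · exact hstT
  have hVcard : ({1, s, t, s*t} : Set (PGL 2 p)).ncard = 4 := by
    have h1n : (1 : PGL 2 p) ∉ ({s, t, s*t} : Set (PGL 2 p)) := by
      simp only [Set.mem_insert_iff, Set.mem_singleton_iff]
      push_neg
      exact ⟨Ne.symm hs1, Ne.symm ht1, Ne.symm hst1⟩
    have hsn : s ∉ ({t, s*t} : Set (PGL 2 p)) := by
      simp only [Set.mem_insert_iff, Set.mem_singleton_iff]
      push_neg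
      exact ⟨Ne.symm hts, Ne.symm hsts⟩
    have htn : t ≠ s*t := Ne.symm hstt
    rw [Set.ncard_insert_of_notMem h1n, Set.ncard_insert_of_notMem hsn,
      Set.ncard_pair htn]
  have hTcar : (T : Set (PGL 2 p)) = {1, s, t, s*t} :=
    (Set.eq_of_subset_of_ncard_le hVsub (by rw [hTset, hVcard]) hTfin).symm
  have hmemT : ∀ x : PGL 2 p, x ∈ T ↔ (x = 1 ∨ x = s ∨ x = t ∨ x = s*t) := by
    intro x
    constructor
    · intro hx
      have : x ∈ (T : Set (PGL 2 p)) := hx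
      rw [hTcar] at this
      simpa using this
    · intro hx
      rcases hx with rfl | rfl | rfl | rfl
      · exact T.one_mem
      · exact hsT
      · exact htT
      · exact hstT
  -- lift s and t to SL₂
  obtain ⟨S, hS⟩ := MonoidHom.mem_range.mp (hTK hsT)
  obtain ⟨Tm, hTm⟩ := MonoidHom.mem_range.mp (hTK htT)
  rw [MonoidHom.comp_apply] at hS hTm
  set uA : GL (Fin 2) (ZMod p) := Matrix.SpecialLinearGroup.toGL S with huA
  set uB : GL (Fin 2) (ZMod p) := Matrix.SpecialLinearGroup.toGL Tm with huB
  set πq := QuotientGroup.mk' (Subgroup.center (GL (Fin 2) (ZMod p))) with hπq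
  have hSA : πq uA = s := hS
  have hSB : πq uB = t := hTm
  set A : Matrix (Fin 2) (Fin 2) (ZMod p) := (uA : Matrix (Fin 2) (Fin 2) (ZMod p)) with hAdef
  set B : Matrix (Fin 2) (Fin 2) (ZMod p) := (uB : Matrix (Fin 2) (Fin 2) (ZMod p)) with hBdef
  have hdA : A.det = 1 := S.2
  have hdB : B.det = 1 := Tm.2
  have hA : A * A = -1 := by
    apply val_sq_neg_one h2 hdA
    · rw [hSA]; exact hss
    · rw [hSA]; exact hs1
  have hB : B * B = -1 := by
    apply val_sq_neg_one h2 hdB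
    · rw [hSB]; exact htt
    · rw [hSB]; exact ht1
  have hBA : B * A = -(A * B) := by
    apply val_anticomm h2 hdA hdB hA hB
    · rw [hSA, hSB]; exact klein_comm hTelem hsT htT
    · rw [hSA]; exact hs1
    · rw [hSB]; exact ht1
    · rw [hSA, hSB]; intro h; exact hts h.symm
  have hSAB : πq (uA * uB) = s * t := by rw [_root_.map_mul, hSA, hSB]
  -- the two extra units
  set uR : GL (Fin 2) (ZMod p) := ⟨A + B, (-2 : ZMod p)⁻¹ • (A + B),
    by rw [mul_smul_comm, q_RR hA hB hBA, smul_smul, inv_mul_cancel₀ hm2, one_smul],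
    by rw [smul_mul_assoc, q_RR hA hB hBA, smul_smul, inv_mul_cancel₀ hm2, one_smul]⟩ with huR
  set Cm : Matrix (Fin 2) (Fin 2) (ZMod p) := 1 + A + B + A*B with hCm
  have hCinv1 : Cm * ((4 : ZMod p)⁻¹ • ((2 : ZMod p) • 1 - Cm)) = 1 := by
    rw [mul_smul_comm, mul_sub, mul_smul_comm, mul_one, q_CC hA hB hBA]
    rw [show (2:ZMod p) • Cm - ((2:ZMod p) • Cm - (4:ZMod p) • 1) = (4:ZMod p) • 1 by module]
    rw [smul_smul, inv_mul_cancel₀ h4, one_smul]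
  have hCinv2 : ((4 : ZMod p)⁻¹ • ((2 : ZMod p) • 1 - Cm)) * Cm = 1 := by
    rw [smul_mul_assoc, sub_mul, smul_mul_assoc, one_mul, q_CC hA hB hBA]
    rw [show (2:ZMod p) • Cm - ((2:ZMod p) • Cm - (4:ZMod p) • 1) = (4:ZMod p) • 1 by module]
    rw [smul_smul, inv_mul_cancel₀ h4, one_smul]
  set uC : GL (Fin 2) (ZMod p) := ⟨Cm, (4 : ZMod p)⁻¹ • ((2 : ZMod p) • 1 - Cm),
    hCinv1, hCinv2⟩ with huC
  set r : PGL 2 p := πq uR with hrdef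
  set c : PGL 2 p := πq uC with hcdef
  -- conjugation relations for r
  have hrs : r * s = t * r := by
    rw [hrdef, ← hSA, ← hSB, ← _root_.map_mul, ← _root_.map_mul]
    congr 1
    apply Units.ext
    rw [Units.val_mul, Units.val_mul]
    exact q_RA hA hB hBA
  have hrt : r * t = s * r := by
    rw [hrdef, ← hSA, ← hSB, ← _root_.map_mul, ← _root_.map_mul]
    congr 1
    apply Units.ext
    rw [Units.val_mul, Units.val_mul]
    exact q_RB hA hB hBA
  have hrst : r * (s*t) = (s*t) * r := by
    rw [hrdef, ← hSAB, ← _root_.map_mul πq uR (uA*uB), ← _root_.map_mul πq (uA*uB) uR]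
    apply pi_eq_of_smul (c := (-1 : ZMod p))
    rw [Units.val_mul, Units.val_mul]
    exact q_RAB hA hB hBA
  have hr2 : r * r = 1 := by
    rw [hrdef, ← _root_.map_mul]
    apply pi_eq_one_of_scalar (c := (-2 : ZMod p))
    rw [Units.val_mul]
    exact q_RR hA hB hBA
  -- conjugation relations for c
  have hcs : c * s = t * c := by
    rw [hcdef, ← hSA, ← hSB, ← _root_.map_mul, ← _root_.map_mul]
    congr 1
    apply Units.ext
    rw [Units.val_mul, Units.val_mul]
    exact q_CA hA hB hBA
  have hct : c * t = (s*t) * c := by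
    rw [hcdef, ← hSAB, ← hSB, ← _root_.map_mul πq uC uB, ← _root_.map_mul πq (uA*uB) uC]
    congr 1
    apply Units.ext
    rw [Units.val_mul, Units.val_mul]
    exact q_CB hA hB hBA
  have hcst : c * (s*t) = s * c := by
    rw [hcdef, ← hSAB, ← hSA, ← _root_.map_mul πq uC (uA*uB), ← _root_.map_mul πq uA uC]
    congr 1
    apply Units.ext
    rw [Units.val_mul, Units.val_mul]
    exact q_CAB hA hB hBA
  have hc3 : c * (c * c) = 1 := by
    rw [hcdef, ← _root_.map_mul, ← _root_.map_mul]
    apply pi_eq_one_of_scalar (c := (-8 : ZMod p))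
    rw [Units.val_mul, Units.val_mul]
    show Cm * (Cm * Cm) = (-8 : ZMod p) • 1
    rw [q_CC hA hB hBA, mul_sub, mul_smul_comm, mul_smul_comm, mul_one, q_CC hA hB hBA]
    module
  -- conjugation equalities
  have conj_eq : ∀ x y z : PGL 2 p, x * y = z * x → x * y * x⁻¹ = z := by
    intro x y z h
    rw [h, mul_assoc, mul_inv_cancel, mul_one]
  have hrs' : r * s * r⁻¹ = t := conj_eq _ _ _ hrs
  have hrt' : r * t * r⁻¹ = s := conj_eq _ _ _ hrt
  have hrst' : r * (s*t) * r⁻¹ = s*t := conj_eq _ _ _ hrst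
  have hcs' : c * s * c⁻¹ = t := conj_eq _ _ _ hcs
  have hct' : c * t * c⁻¹ = s*t := conj_eq _ _ _ hct
  have hcst' : c * (s*t) * c⁻¹ = s := conj_eq _ _ _ hcst
  have hrinv : r⁻¹ = r := inv_eq_of_mul_eq_one_right hr2
  have hcinv : c⁻¹ = c * c := inv_eq_of_mul_eq_one_right hc3
  -- normalizer membership
  have hrN : r ∈ (Subgroup.normalizer (T : Set (PGL 2 p))) := by
    apply mem_normalizer_of_conj
    · intro x hx
      rcases (hmemT x).mp hx with rfl | rfl | rfl | rfl
      · simpa using T.one_mem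
      · rw [hrs']; exact htT
      · rw [hrt']; exact hsT
      · rw [hrst']; exact hstT
    · intro x hx
      have hswap : r⁻¹ * x * r = r * x * r⁻¹ := by rw [hrinv]
      rw [hswap]
      rcases (hmemT x).mp hx with rfl | rfl | rfl | rfl
      · simpa using T.one_mem
      · rw [hrs']; exact htT
      · rw [hrt']; exact hsT
      · rw [hrst']; exact hstT
  have inv_conj : ∀ g x y : PGL 2 p, g * x = y * g → g⁻¹ * y * g = x := by
    intro g x y h
    calc g⁻¹ * y * g = g⁻¹ * (y * g) := by rw [mul_assoc]
    _ = g⁻¹ * (g * x) := by rw [← h]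
    _ = x := by rw [← mul_assoc, inv_mul_cancel, one_mul]
  have hcsinv : c⁻¹ * t * c = s := inv_conj _ _ _ hcs
  have hctinv : c⁻¹ * (s*t) * c = t := inv_conj _ _ _ hct
  have hcstinv : c⁻¹ * s * c = s*t := inv_conj _ _ _ hcst
  have hcN : c ∈ (Subgroup.normalizer (T : Set (PGL 2 p))) := by
    apply mem_normalizer_of_conj
    · intro x hx
      rcases (hmemT x).mp hx with rfl | rfl | rfl | rfl
      · simpa using T.one_mem
      · rw [hcs']; exact htT
      · rw [hct']; exact hstT
      · rw [hcst']; exact hsT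
    · intro x hx
      rcases (hmemT x).mp hx with rfl | rfl | rfl | rfl
      · simpa using T.one_mem
      · rw [hcstinv]; exact hstT
      · rw [hcsinv]; exact hsT
      · rw [hctinv]; exact htT
  -- the permutation representation
  set X := {x : PGL 2 p // x ∈ T ∧ x ≠ 1} with hX
  set φ := conjPermHom T with hφ
  -- card X = 3
  have hX3 : Nat.card X = 3 := by
    have e : X ≃ ({s, t, s*t} : Set (PGL 2 p)) := by
      apply Equiv.subtypeEquivRight
      intro x
      constructor
      · rintro ⟨hxT, hx1⟩
        rcases (hmemT x).mp hxT with rfl | rfl | rfl | rfl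
        · exact absurd rfl hx1
        · exact Set.mem_insert _ _
        · exact Set.mem_insert_of_mem _ (Set.mem_insert _ _)
        · exact Set.mem_insert_of_mem _ (Set.mem_insert_of_mem _ rfl)
      · intro hx
        rcases hx with rfl | rfl | rfl
        · exact ⟨hsT, hs1⟩
        · exact ⟨htT, ht1⟩
        · exact ⟨hstT, hst1⟩
    rw [Nat.card_congr e, Nat.card_coe_set_eq]
    exact Set.ncard_eq_three.mpr ⟨s, t, s*t, Ne.symm hts, Ne.symm hsts, Ne.symm hstt, rfl⟩
  haveI hXfin : Finite X := Nat.finite_of_card_ne_zero (by rw [hX3]; norm_num)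
  haveI := Fintype.ofFinite X
  have hPX : Nat.card (Equiv.Perm X) = 6 := by
    rw [Nat.card_eq_fintype_card, Fintype.card_perm]
    have : Fintype.card X = 3 := by rw [← Nat.card_eq_fintype_card, hX3]
    rw [this]
    rfl
  -- kernel of φ is T
  have hTleN : T ≤ (Subgroup.normalizer (T : Set (PGL 2 p))) := Subgroup.le_normalizer
  have hker : φ.ker = T.subgroupOf (Subgroup.normalizer (T : Set (PGL 2 p))) := by
    ext n
    rw [MonoidHom.mem_ker, Subgroup.mem_subgroupOf]
    constructor
    · intro hn
      -- n commutes with s and t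
      have hfix : ∀ x : X, (n : PGL 2 p) * (x : PGL 2 p) * (n : PGL 2 p)⁻¹ = x := by
        intro x
        have := Equiv.ext_iff.mp hn x
        exact congrArg Subtype.val this
      have hcs2 : (n : PGL 2 p) * s = s * (n : PGL 2 p) := by
        have h1 := hfix ⟨s, hsT, hs1⟩
        have := congrArg (fun y => y * (n : PGL 2 p)) h1
        simpa [mul_assoc] using this
      have hct2 : (n : PGL 2 p) * t = t * (n : PGL 2 p) := by
        have h1 := hfix ⟨t, htT, ht1⟩
        have := congrArg (fun y => y * (n : PGL 2 p)) h1
        simpa [mul_assoc] using this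
      -- lift n
      obtain ⟨uM, huM⟩ := QuotientGroup.mk'_surjective
        (Subgroup.center (GL (Fin 2) (ZMod p))) (n : PGL 2 p)
      have hdM : ((uM : Matrix (Fin 2) (Fin 2) (ZMod p))).det ≠ 0 := by
        have hval : (uM : Matrix (Fin 2) (Fin 2) (ZMod p)) * ((uM⁻¹ : GL (Fin 2) (ZMod p)) :
            Matrix (Fin 2) (Fin 2) (ZMod p)) = 1 := by
          rw [← Units.val_mul, mul_inv_cancel, Units.val_one]
        have := congrArg Matrix.det hval
        rw [Matrix.det_mul, Matrix.det_one] at this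
        exact left_ne_zero_of_mul_eq_one this
      have getcomm : ∀ (v : GL (Fin 2) (ZMod p)),
          (v : Matrix (Fin 2) (Fin 2) (ZMod p)).det = 1 →
          (n : PGL 2 p) * πq v = πq v * (n : PGL 2 p) →
          (uM : Matrix (Fin 2) (Fin 2) (ZMod p)) * v = v * uM ∨
            (uM : Matrix (Fin 2) (Fin 2) (ZMod p)) * v = -((v : Matrix (Fin 2) (Fin 2) (ZMod p)) * uM) := by
        intro v hdv hcomm
        have e1 : πq (uM * v) = πq (v * uM) := by
          rw [_root_.map_mul, _root_.map_mul, huM]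
          exact hcomm
        obtain ⟨d, hd0, hdv2⟩ := val_smul_of_pi_eq e1
        rw [Units.val_mul, Units.val_mul] at hdv2
        have hd2 : d * d = 1 := by
          have hddet := congrArg Matrix.det hdv2
          rw [Matrix.det_mul, Matrix.det_smul, Matrix.det_mul, hdv] at hddet
          simp only [Fintype.card_fin, mul_one, one_mul] at hddet
          apply mul_right_cancel₀ hdM
          linear_combination -hddet
        rcases mul_self_eq_one_iff.mp hd2 with h | h
        · left; rw [hdv2, h, one_smul]
        · right; rw [hdv2, h, neg_smul, one_smul]
      have hMA := getcomm uA hdA (by rw [hSA]; exact hcs2)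
      have hMB := getcomm uB hdB (by rw [hSB]; exact hct2)
      rcases q_centralizer_cases h2 hA hB hBA hdA
        ((uM : Matrix (Fin 2) (Fin 2) (ZMod p))) hMA hMB with ⟨d, hdv⟩ | ⟨d, hdv⟩ | ⟨d, hdv⟩ | ⟨d, hdv⟩
      · have : (n : PGL 2 p) = 1 := by rw [← huM]; exact pi_eq_one_of_scalar hdv
        rw [this]; exact T.one_mem
      · have : (n : PGL 2 p) = s := by rw [← huM, ← hSA]; exact pi_eq_of_smul hdv
        rw [this]; exact hsT
      · have : (n : PGL 2 p) = t := by rw [← huM, ← hSB]; exact pi_eq_of_smul hdv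
        rw [this]; exact htT
      · have : (n : PGL 2 p) = s*t := by
          rw [← huM, ← hSAB]
          apply pi_eq_of_smul (c := d)
          rw [Units.val_mul]
          exact hdv
        rw [this]; exact hstT
    · intro hn
      apply Equiv.ext
      intro x
      apply Subtype.ext
      show (n : PGL 2 p) * (x : PGL 2 p) * (n : PGL 2 p)⁻¹ = x
      have hcomm := klein_comm hTelem hn x.2.1
      rw [hcomm, mul_assoc, mul_inv_cancel, mul_one]
  have hkercard : Nat.card φ.ker = 4 := by
    rw [hker]
    rw [Nat.card_congr (Subgroup.subgroupOfEquivOfLe hTleN).toEquiv]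
    exact hTcard
  -- the image has order 6
  set σR := φ ⟨r, hrN⟩ with hσR
  set σC := φ ⟨c, hcN⟩ with hσC
  set xs : X := ⟨s, hsT, hs1⟩ with hxs
  set xt : X := ⟨t, htT, ht1⟩ with hxt
  have hσRxs : σR xs = xt := by
    apply Subtype.ext
    show r * s * r⁻¹ = t
    exact hrs'
  have hσCxs : σC xs = xt := by
    apply Subtype.ext
    show c * s * c⁻¹ = t
    exact hcs'
  have hxsxt : xs ≠ xt := by
    intro h
    exact hts (congrArg Subtype.val h).symm
  have hσRne : σR ≠ 1 := by
    intro h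
    apply hxsxt
    rw [← hσRxs, h, Equiv.Perm.one_apply]
  have hσCne : σC ≠ 1 := by
    intro h
    apply hxsxt
    rw [← hσCxs, h, Equiv.Perm.one_apply]
  have hσR2 : σR ^ 2 = 1 := by
    have hn2 : (⟨r, hrN⟩ : (Subgroup.normalizer (T : Set (PGL 2 p)))) ^ 2 = 1 := by
      apply Subtype.ext
      rw [SubmonoidClass.coe_pow]
      show r ^ 2 = ((1 : (Subgroup.normalizer (T : Set (PGL 2 p)))) : PGL 2 p)
      rw [pow_two, hr2]
      rfl
    calc σR ^ 2 = φ ((⟨r, hrN⟩ : (Subgroup.normalizer (T : Set (PGL 2 p)))) ^ 2) := (map_pow φ _ 2).symm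
    _ = 1 := by rw [hn2, map_one]
  have hσC3 : σC ^ 3 = 1 := by
    have hn3 : (⟨c, hcN⟩ : (Subgroup.normalizer (T : Set (PGL 2 p)))) ^ 3 = 1 := by
      apply Subtype.ext
      rw [SubmonoidClass.coe_pow]
      show c ^ 3 = ((1 : (Subgroup.normalizer (T : Set (PGL 2 p)))) : PGL 2 p)
      have h3' : c ^ 3 = 1 := by rw [pow_succ, pow_two, mul_assoc, hc3]
      rw [h3']
      rfl
    calc σC ^ 3 = φ ((⟨c, hcN⟩ : (Subgroup.normalizer (T : Set (PGL 2 p)))) ^ 3) := (map_pow φ _ 3).symm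
    _ = 1 := by rw [hn3, map_one]
  haveI f2 : Fact (Nat.Prime 2) := ⟨Nat.prime_two⟩
  haveI f3 : Fact (Nat.Prime 3) := ⟨Nat.prime_three⟩
  have hordR : orderOf σR = 2 := orderOf_eq_prime hσR2 hσRne
  have hordC : orderOf σC = 3 := orderOf_eq_prime hσC3 hσCne
  have h2dvd : 2 ∣ Nat.card φ.range := by
    have hdv := Subgroup.orderOf_dvd_natCard φ.range
      (show σR ∈ φ.range from ⟨⟨r, hrN⟩, rfl⟩)
    rw [hordR] at hdv
    exact hdv
  have h3dvd : 3 ∣ Nat.card φ.range := by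
    have hdv := Subgroup.orderOf_dvd_natCard φ.range
      (show σC ∈ φ.range from ⟨⟨c, hcN⟩, rfl⟩)
    rw [hordC] at hdv
    exact hdv
  have h6dvd : 6 ∣ Nat.card φ.range := by
    have := Nat.Coprime.mul_dvd_of_dvd_of_dvd (by norm_num : Nat.Coprime 2 3) h2dvd h3dvd
    exact this
  have hdvd6 : Nat.card φ.range ∣ 6 := by
    rw [← hPX]
    exact Subgroup.card_subgroup_dvd_card φ.range
  have hrange : Nat.card φ.range = 6 := Nat.dvd_antisymm hdvd6 h6dvd
  -- conclusion
  have hquot : Nat.card ((Subgroup.normalizer (T : Set (PGL 2 p))) ⧸ φ.ker) = 6 := by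
    rw [Nat.card_congr (QuotientGroup.quotientKerEquivRange φ).toEquiv]
    exact hrange
  rw [Subgroup.card_eq_card_quotient_mul_card_subgroup φ.ker, hquot, hkercard]
end

section
/- Let q = p^f be a prime power, n ≥ 2, G = SL(n,q), let P be the Sylow p-subgroup of G consisting of all lower unitriangular matrices, and let N = {I + a·E_{n,1} : a ∈ F_q}, where E_{n,1} is the matrix with (n,1)-entry 1 and all other entries 0. Then N is a subgroup of G of order q, N is normal in N_G(P), and N is a minimal normal subgroup of N_G(P). -/
open Matrix

namespace Statement15Aux

private lemma sum_two_squares {F : Type*} [Field F] [Fintype F] (x : F) :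
    ∃ a b : F, a ^ 2 + b ^ 2 = x := by
  by_cases h2 : ringChar F = 2
  · obtain ⟨y, hy⟩ := FiniteField.isSquare_of_char_two h2 x
    exact ⟨y, 0, by rw [hy]; ring⟩
  · obtain ⟨a, b, hab⟩ :=
      FiniteField.exists_root_sum_quadratic (f := (Polynomial.X ^ 2 : Polynomial F))
        (g := Polynomial.X ^ 2 - Polynomial.C x) (Polynomial.degree_X_pow 2)
        (Polynomial.degree_X_pow_sub_C (by norm_num) _)
        (FiniteField.odd_card_of_char_ne_two h2)
    refine ⟨a, b, ?_⟩
    simp only [Polynomial.eval_pow, Polynomial.eval_X, Polynomial.eval_sub,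
      Polynomial.eval_C] at hab
    linear_combination hab

private def i0 (n : ℕ) (hn : 2 ≤ n) : Fin n := ⟨n - 1, by omega⟩
private def j0 (n : ℕ) (hn : 2 ≤ n) : Fin n := ⟨0, by omega⟩

private lemma i0_ne_j0 {n : ℕ} (hn : 2 ≤ n) : i0 n hn ≠ j0 n hn := by
  apply Fin.ne_of_val_ne
  show n - 1 ≠ 0
  omega

private lemma j0_lt_i0 {n : ℕ} (hn : 2 ≤ n) : j0 n hn < i0 n hn := by
  apply Fin.lt_def.mpr
  show 0 < n - 1
  omega

variable {n : ℕ} {F : Type*} [Field F]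

/-- lower unitriangular times E = E -/
private lemma mul_std (hn : 2 ≤ n) (A : Matrix (Fin n) (Fin n) F)
    (htr : ∀ i j : Fin n, i < j → A i j = 0) (hdg : ∀ i : Fin n, A i i = 1) (a : F) :
    A * single (i0 n hn) (j0 n hn) a = single (i0 n hn) (j0 n hn) a := by
  ext i j
  rw [mul_apply, Finset.sum_eq_single (i0 n hn)
    (fun k _ hk => by rw [single_apply_of_row_ne (Ne.symm hk), mul_zero])
    (fun h => absurd (Finset.mem_univ _) h)]
  by_cases hi : i = i0 n hn
  · rw [hi, hdg, one_mul]
  · have hvne : (i : ℕ) ≠ n - 1 := fun h => hi (Fin.ext h)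
    have hlt : i < i0 n hn := by
      have h1 := i.isLt
      apply Fin.lt_def.mpr
      show (i : ℕ) < n - 1
      omega
    rw [htr _ _ hlt, zero_mul, single_apply_of_row_ne (Ne.symm hi)]

/-- E times lower unitriangular = E -/
private lemma std_mul (hn : 2 ≤ n) (A : Matrix (Fin n) (Fin n) F)
    (htr : ∀ i j : Fin n, i < j → A i j = 0) (hdg : ∀ i : Fin n, A i i = 1) (a : F) :
    single (i0 n hn) (j0 n hn) a * A = single (i0 n hn) (j0 n hn) a := by
  ext i j
  rw [mul_apply, Finset.sum_eq_single (j0 n hn)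
    (fun k _ hk => by rw [single_apply_of_col_ne _ _ (Ne.symm hk), zero_mul])
    (fun h => absurd (Finset.mem_univ _) h)]
  by_cases hj : j = j0 n hn
  · rw [hj, hdg, mul_one]
  · have hvne : (j : ℕ) ≠ 0 := fun h => hj (Fin.ext h)
    have hlt : j0 n hn < j := by
      apply Fin.lt_def.mpr
      show 0 < (j : ℕ)
      omega
    rw [htr _ _ hlt, mul_zero, single_apply_of_col_ne _ _ (Ne.symm hj)]

private lemma T_commutes (hn : 2 ≤ n) (a : F) (C : Matrix (Fin n) (Fin n) F)
    (htr : ∀ i j : Fin n, i < j → C i j = 0) (hdg : ∀ i : Fin n, C i i = 1) :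
    transvection (i0 n hn) (j0 n hn) a * C = C * transvection (i0 n hn) (j0 n hn) a := by
  simp only [transvection, add_mul, mul_add, one_mul, mul_one,
    std_mul hn C htr hdg a, mul_std hn C htr hdg a]

/-- unitriangular entries of a transvection matrix with l < k -/
private lemma transvec_tri {k l : Fin n} (hlk : l < k) (c : F) :
    (∀ i j : Fin n, i < j → (1 + single k l c) i j = 0) ∧
      (∀ i : Fin n, (1 + single k l c) i i = 1) := by
  constructor
  · intro i j hij
    rw [Matrix.add_apply, one_apply_ne hij.ne, single_apply_of_ne, add_zero]
    rintro ⟨rfl, rfl⟩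
    exact absurd hij (not_lt.mpr hlk.le)
  · intro i
    rw [Matrix.add_apply, one_apply_eq, single_apply_of_ne, add_zero]
    rintro ⟨rfl, rfl⟩
    exact absurd hlk (lt_irrefl _)

/-- a matrix in P commuting with all lower elementary matrices lies in N -/
private lemma center_eq (hn : 2 ≤ n) (B : Matrix (Fin n) (Fin n) F)
    (htr : ∀ i j : Fin n, i < j → B i j = 0) (hdg : ∀ i : Fin n, B i i = 1)
    (hc : ∀ k l : Fin n, l < k → Commute (single k l (1 : F)) B) :
    B = 1 + single (i0 n hn) (j0 n hn) (B (i0 n hn) (j0 n hn)) := by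
  ext i j
  rw [Matrix.add_apply]
  by_cases hij : i = j
  · subst hij
    rw [hdg, one_apply_eq, single_apply_of_ne, add_zero]
    rintro ⟨h1, h2⟩
    exact i0_ne_j0 hn (h1.trans h2.symm)
  · rw [one_apply_ne hij]
    by_cases hlt : i < j
    · rw [htr _ _ hlt, single_apply_of_ne, add_zero]
      rintro ⟨rfl, rfl⟩
      exact absurd hlt (not_lt.mpr (j0_lt_i0 hn).le)
    · by_cases hcase : i = i0 n hn ∧ j = j0 n hn
      · obtain ⟨rfl, rfl⟩ := hcase
        rw [single_apply_same, zero_add]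
      · have hBij : B i j = 0 := by
          by_cases hj : j = j0 n hn
          · have hii0 : i ≠ i0 n hn := fun h => hcase ⟨h, hj⟩
            have hvne : (i : ℕ) ≠ n - 1 := fun h => hii0 (Fin.ext h)
            have hlt' : i < i0 n hn := by
              have h1 := i.isLt
              apply Fin.lt_def.mpr
              show (i : ℕ) < n - 1
              omega
            exact Matrix.row_eq_zero_of_commute_single
              (hc (i0 n hn) i hlt') (Ne.symm hij)
          · have hvne : (j : ℕ) ≠ 0 := fun h => hj (Fin.ext h)
            have hlt' : j0 n hn < j := by
              apply Fin.lt_def.mpr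
              show 0 < (j : ℕ)
              omega
            exact Matrix.col_eq_zero_of_commute_single (hc j (j0 n hn) hlt') hij
        rw [hBij, single_apply_of_ne, add_zero]
        rintro ⟨rfl, rfl⟩
        exact hcase ⟨rfl, rfl⟩

/-- the SL transvection -/
private def T (hn : 2 ≤ n) (a : F) : Matrix.SpecialLinearGroup (Fin n) F :=
  ⟨transvection (i0 n hn) (j0 n hn) a,
    det_transvection_of_ne _ _ (i0_ne_j0 hn) a⟩

private lemma T_commutes_SL (hn : 2 ≤ n) (a : F) (C : Matrix.SpecialLinearGroup (Fin n) F)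
    (htr : ∀ i j : Fin n, i < j → (C : Matrix (Fin n) (Fin n) F) i j = 0)
    (hdg : ∀ i : Fin n, (C : Matrix (Fin n) (Fin n) F) i i = 1) :
    T hn a * C = C * T hn a := by
  apply Subtype.ext
  show (T hn a : Matrix (Fin n) (Fin n) F) * (C : Matrix (Fin n) (Fin n) F)
    = (C : Matrix (Fin n) (Fin n) F) * (T hn a : Matrix (Fin n) (Fin n) F)
  exact T_commutes hn a _ htr hdg

private lemma T_coe (hn : 2 ≤ n) (a : F) :
    (T hn a : Matrix (Fin n) (Fin n) F) =
      1 + single (i0 n hn) (j0 n hn) a := rfl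

private lemma T_mul (hn : 2 ≤ n) (a b : F) : T (n := n) (F := F) hn a * T hn b = T hn (a + b) :=
  Subtype.ext (transvection_mul_transvection_same _ _ (i0_ne_j0 hn) a b)

/-- the diagonal vector -/
private def dvec (hn : 2 ≤ n) (t : F) : Fin n → F :=
  fun k => if k = j0 n hn then t⁻¹ else if k = i0 n hn then t else 1

private lemma dvec_ne_zero (hn : 2 ≤ n) {t : F} (ht : t ≠ 0) (k : Fin n) :
    dvec hn t k ≠ 0 := by
  simp only [dvec]
  split_ifs
  · exact inv_ne_zero ht
  · exact ht
  · exact one_ne_zero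

private lemma dvec_mul_dvec_inv (hn : 2 ≤ n) {t : F} (ht : t ≠ 0) (k : Fin n) :
    dvec hn t k * dvec hn t⁻¹ k = 1 := by
  simp only [dvec, inv_inv]
  split_ifs
  · exact inv_mul_cancel₀ ht
  · exact mul_inv_cancel₀ ht
  · exact one_mul 1

private lemma dvec_det (hn : 2 ≤ n) {t : F} (ht : t ≠ 0) :
    (diagonal (dvec hn t)).det = 1 := by
  classical
  rw [det_diagonal]
  rw [← Finset.mul_prod_erase Finset.univ _ (Finset.mem_univ (j0 n hn))]
  have hmem : i0 n hn ∈ Finset.univ.erase (j0 n hn) :=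
    Finset.mem_erase.mpr ⟨i0_ne_j0 hn, Finset.mem_univ _⟩
  rw [← Finset.mul_prod_erase _ _ hmem]
  have h1 : ∀ k ∈ (Finset.univ.erase (j0 n hn)).erase (i0 n hn), dvec hn t k = 1 := by
    intro k hk
    have hk1 := (Finset.mem_erase.mp hk).1
    have hk2 := (Finset.mem_erase.mp (Finset.mem_erase.mp hk).2).1
    simp [dvec, hk1, hk2]
  rw [Finset.prod_eq_one h1, mul_one]
  have h2 : dvec hn t (j0 n hn) = t⁻¹ := by simp [dvec]
  have h3 : dvec hn t (i0 n hn) = t := by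
    simp [dvec, (i0_ne_j0 hn)]
  rw [h2, h3, inv_mul_cancel₀ ht]

private def Dg (hn : 2 ≤ n) (t : F) (ht : t ≠ 0) : Matrix.SpecialLinearGroup (Fin n) F :=
  ⟨diagonal (dvec hn t), dvec_det hn ht⟩

private lemma Dg_coe (hn : 2 ≤ n) (t : F) (ht : t ≠ 0) :
    ((Dg hn t ht : Matrix.SpecialLinearGroup (Fin n) F) : Matrix (Fin n) (Fin n) F) =
      diagonal (dvec hn t) := rfl

private lemma Dg_inv_coe (hn : 2 ≤ n) (t : F) (ht : t ≠ 0) :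
    (((Dg hn t ht)⁻¹ : Matrix.SpecialLinearGroup (Fin n) F) : Matrix (Fin n) (Fin n) F) =
      diagonal (dvec hn t⁻¹) := by
  have h2 : diagonal (dvec hn t⁻¹) * (Dg hn t ht : Matrix (Fin n) (Fin n) F) = 1 := by
    show diagonal (dvec hn t⁻¹) * diagonal (dvec hn t) = 1
    rw [diagonal_mul_diagonal]
    have hfun : (fun k => dvec hn t⁻¹ k * dvec hn t k) = fun _ : Fin n => (1 : F) :=
      funext (fun k => by rw [mul_comm, dvec_mul_dvec_inv hn ht k])
    rw [hfun]
    exact diagonal_one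
  have h1 : (Dg hn t ht : Matrix (Fin n) (Fin n) F) *
      (((Dg hn t ht)⁻¹ : Matrix.SpecialLinearGroup (Fin n) F) : Matrix (Fin n) (Fin n) F) = 1 := by
    rw [← Matrix.SpecialLinearGroup.coe_mul, mul_inv_cancel,
      Matrix.SpecialLinearGroup.coe_one]
  calc (((Dg hn t ht)⁻¹ : Matrix.SpecialLinearGroup (Fin n) F) : Matrix (Fin n) (Fin n) F)
      = 1 * (((Dg hn t ht)⁻¹ : Matrix.SpecialLinearGroup (Fin n) F) : Matrix (Fin n) (Fin n) F) :=
        (one_mul _).symm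
    _ = diagonal (dvec hn t⁻¹) * ((Dg hn t ht : Matrix (Fin n) (Fin n) F) *
        (((Dg hn t ht)⁻¹ : Matrix.SpecialLinearGroup (Fin n) F) : Matrix (Fin n) (Fin n) F)) := by
        rw [← h2, Matrix.mul_assoc]
    _ = diagonal (dvec hn t⁻¹) := by rw [h1, mul_one]

private lemma Dg_conj_apply (hn : 2 ≤ n) (t : F) (ht : t ≠ 0)
    (A : Matrix.SpecialLinearGroup (Fin n) F) (i j : Fin n) :
    ((Dg hn t ht * A * (Dg hn t ht)⁻¹ : Matrix.SpecialLinearGroup (Fin n) F) :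
        Matrix (Fin n) (Fin n) F) i j
      = dvec hn t i * (A : Matrix (Fin n) (Fin n) F) i j * dvec hn t⁻¹ j := by
  rw [Matrix.SpecialLinearGroup.coe_mul, Matrix.SpecialLinearGroup.coe_mul,
    Dg_inv_coe hn t ht, Dg_coe hn t ht, mul_diagonal, diagonal_mul]

private lemma Dg_conj_T (hn : 2 ≤ n) (t : F) (ht : t ≠ 0) (a : F) :
    Dg hn t ht * T hn a * (Dg hn t ht)⁻¹ = T hn (t * t * a) := by
  apply Subtype.ext
  ext i j
  rw [Dg_conj_apply hn t ht (T hn a) i j, T_coe, T_coe, Matrix.add_apply, Matrix.add_apply]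
  by_cases hij : i = i0 n hn ∧ j = j0 n hn
  · obtain ⟨rfl, rfl⟩ := hij
    rw [one_apply_ne (i0_ne_j0 hn), single_apply_same, single_apply_same]
    have h2 : dvec hn t (j0 n hn) = t⁻¹ := by simp [dvec]
    have h3 : dvec hn t (i0 n hn) = t := by simp [dvec, (i0_ne_j0 hn)]
    have h4 : dvec hn t⁻¹ (j0 n hn) = t := by simp [dvec]
    rw [h3, h4]
    ring
  · have hne1 : ¬(i0 n hn = i ∧ j0 n hn = j) := fun h => hij ⟨h.1.symm, h.2.symm⟩
    rw [single_apply_of_ne _ _ _ _ _ hne1,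
      single_apply_of_ne _ _ _ _ _ hne1, add_zero]
    by_cases hd : i = j
    · subst hd
      rw [one_apply_eq, mul_one, dvec_mul_dvec_inv hn ht i]
    · rw [one_apply_ne hd, mul_zero, zero_mul]

end Statement15Aux

open Statement15Aux

/-- In `G = SL(n, q)` (`q = p^f`), with `P` the Sylow `p`-subgroup of lower unitriangular
matrices and `N = {I + a·E_{n,1} : a ∈ F_q}`, the subgroup `N` has order `q` and is a
minimal normal subgroup of `N_G(P)`. -/
theorem statement15 (p f n : ℕ) (hp : p.Prime) (hf : 0 < f) (hn : 2 ≤ n)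
    (F : Type*) [Field F] [Fintype F] (hF : Fintype.card F = p ^ f)
    (P : Subgroup (Matrix.SpecialLinearGroup (Fin n) F))
    (hP : ∀ A : Matrix.SpecialLinearGroup (Fin n) F,
      A ∈ P ↔ (∀ i j : Fin n, i < j → (A : Matrix (Fin n) (Fin n) F) i j = 0) ∧
        ∀ i : Fin n, (A : Matrix (Fin n) (Fin n) F) i i = 1)
    (N : Subgroup (Matrix.SpecialLinearGroup (Fin n) F))
    (hN : ∀ A : Matrix.SpecialLinearGroup (Fin n) F,
      A ∈ N ↔ ∃ a : F, (A : Matrix (Fin n) (Fin n) F) =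
        1 + Matrix.single (⟨n - 1, by omega⟩ : Fin n) (⟨0, by omega⟩ : Fin n) a) :
    Nat.card N = p ^ f ∧
      N ≤ (Subgroup.normalizer (P : Set (Matrix.SpecialLinearGroup (Fin n) F))) ∧
      (N.subgroupOf (Subgroup.normalizer (P : Set (Matrix.SpecialLinearGroup (Fin n) F)))).Normal ∧
      N.subgroupOf (Subgroup.normalizer (P : Set (Matrix.SpecialLinearGroup (Fin n) F))) ≠ ⊥ ∧
      ∀ W : Subgroup (Subgroup.normalizer (P : Set (Matrix.SpecialLinearGroup (Fin n) F))), W.Normal → W ≤ N.subgroupOf (Subgroup.normalizer (P : Set (Matrix.SpecialLinearGroup (Fin n) F))) →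
        W = ⊥ ∨ W = N.subgroupOf (Subgroup.normalizer (P : Set (Matrix.SpecialLinearGroup (Fin n) F))) := by
  -- reinterpret hN via i0/j0
  have hN' : ∀ A : Matrix.SpecialLinearGroup (Fin n) F,
      A ∈ N ↔ ∃ a : F, (A : Matrix (Fin n) (Fin n) F) =
        1 + Matrix.single (i0 n hn) (j0 n hn) a := hN
  -- transvection SL elements with lower index pairs are in P
  have hTP : ∀ a : F, T hn a ∈ P := by
    intro a
    exact (hP _).mpr (transvec_tri (j0_lt_i0 hn) a)
  -- N ≤ P
  have hNP : N ≤ P := by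
    intro x hx
    obtain ⟨a, hxa⟩ := (hN' x).mp hx
    have hx' : x = T hn a := Subtype.ext hxa
    rw [hx']
    exact hTP a
  have hNnorm : N ≤ (Subgroup.normalizer (P : Set (Matrix.SpecialLinearGroup (Fin n) F))) := le_trans hNP Subgroup.le_normalizer
  -- diagonal elements are in the normalizer
  have hDgnorm : ∀ (t : F) (ht : t ≠ 0), Dg hn t ht ∈ (Subgroup.normalizer (P : Set (Matrix.SpecialLinearGroup (Fin n) F))) := by
    intro t ht
    rw [Subgroup.mem_normalizer_iff]
    intro A
    rw [hP, hP]
    constructor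
    · rintro ⟨h1, h2⟩
      constructor
      · intro i j hij
        rw [Dg_conj_apply hn t ht A i j, h1 i j hij, mul_zero, zero_mul]
      · intro i
        rw [Dg_conj_apply hn t ht A i i, h2 i, mul_one, dvec_mul_dvec_inv hn ht i]
    · rintro ⟨h1, h2⟩
      constructor
      · intro i j hij
        have h := h1 i j hij
        rw [Dg_conj_apply hn t ht A i j] at h
        rcases mul_eq_zero.mp h with h' | h'
        · rcases mul_eq_zero.mp h' with h'' | h''
          · exact absurd h'' (dvec_ne_zero hn ht i)
          · exact h''
        · exact absurd h' (dvec_ne_zero hn (inv_ne_zero ht) j)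
      · intro i
        have h := h2 i
        rw [Dg_conj_apply hn t ht A i i,
          mul_comm (dvec hn t i) ((A : Matrix (Fin n) (Fin n) F) i i), mul_assoc,
          dvec_mul_dvec_inv hn ht i, mul_one] at h
        exact h
  -- conjugation by normalizer elements preserves N
  have key : ∀ g ∈ (Subgroup.normalizer (P : Set (Matrix.SpecialLinearGroup (Fin n) F))), ∀ x ∈ N, g * x * g⁻¹ ∈ N := by
    intro g hg x hx
    obtain ⟨a, hxa⟩ := (hN' x).mp hx
    have hxP : x ∈ P := hNP hx
    have hyP : g * x * g⁻¹ ∈ P := (Subgroup.mem_normalizer_iff.mp hg x).mp hxP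
    obtain ⟨hytr, hydg⟩ := (hP _).mp hyP
    -- the conjugate commutes with all of P
    have hyC : ∀ C ∈ P, (g * x * g⁻¹) * C = C * (g * x * g⁻¹) := by
      intro C hC
      have hC' : g⁻¹ * C * g ∈ P := by
        have h := (Subgroup.mem_normalizer_iff.mp ((Subgroup.normalizer (P : Set (Matrix.SpecialLinearGroup (Fin n) F))).inv_mem hg) C).mp hC
        rwa [inv_inv] at h
      obtain ⟨hCtr, hCdg⟩ := (hP _).mp hC'
      have hxT : x = T hn a := Subtype.ext hxa
      have hx_comm : x * (g⁻¹ * C * g) = (g⁻¹ * C * g) * x := by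
        rw [hxT]
        exact T_commutes_SL hn a _ hCtr hCdg
      have h := congrArg (fun z => g * z * g⁻¹) hx_comm
      simpa [mul_assoc] using h
    rw [hN']
    refine ⟨((g * x * g⁻¹ : Matrix.SpecialLinearGroup (Fin n) F) :
      Matrix (Fin n) (Fin n) F) (i0 n hn) (j0 n hn), ?_⟩
    apply center_eq hn _ hytr hydg
    intro k l hlk
    have hmemP : (⟨1 + single k l (1 : F),
        Matrix.det_transvection_of_ne k l hlk.ne' 1⟩ :
        Matrix.SpecialLinearGroup (Fin n) F) ∈ P :=
      (hP _).mpr (transvec_tri hlk 1)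
    have h := hyC _ hmemP
    have h' := congrArg (fun z : Matrix.SpecialLinearGroup (Fin n) F =>
      (z : Matrix (Fin n) (Fin n) F)) h
    have h'' : ((g * x * g⁻¹ : Matrix.SpecialLinearGroup (Fin n) F) :
        Matrix (Fin n) (Fin n) F) * (1 + single k l (1 : F)) =
        (1 + single k l (1 : F)) * ((g * x * g⁻¹ :
          Matrix.SpecialLinearGroup (Fin n) F) : Matrix (Fin n) (Fin n) F) := h'
    rw [mul_add, add_mul, mul_one, one_mul] at h''
    exact (add_left_cancel h'').symm
  -- Part 1 : cardinality
  have hcard : Nat.card N = p ^ f := by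
    have hbij : Function.Bijective
        (fun a : F => (⟨T hn a, (hN' _).mpr ⟨a, rfl⟩⟩ : N)) := by
      constructor
      · intro a b hab
        have h := congrArg (fun z : N =>
          ((z : Matrix.SpecialLinearGroup (Fin n) F) :
            Matrix (Fin n) (Fin n) F) (i0 n hn) (j0 n hn)) hab
        simpa [T_coe, Matrix.add_apply, one_apply_ne (i0_ne_j0 hn)] using h
      · rintro ⟨x, hx⟩
        obtain ⟨a, hxa⟩ := (hN' x).mp hx
        exact ⟨a, Subtype.ext (Subtype.ext hxa.symm)⟩
    calc Nat.card N = Nat.card F := (Nat.card_congr (Equiv.ofBijective _ hbij)).symm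
      _ = Fintype.card F := Nat.card_eq_fintype_card
      _ = p ^ f := hF
  refine ⟨hcard, hNnorm, ?_, ?_, ?_⟩
  -- Part 3 : normality
  · constructor
    intro x hx g
    rw [Subgroup.mem_subgroupOf] at hx ⊢
    have h := key (g : Matrix.SpecialLinearGroup (Fin n) F) g.2
      (x : Matrix.SpecialLinearGroup (Fin n) F) hx
    simpa using h
  -- Part 4 : nontriviality
  · intro hbot
    have hmem : (⟨T hn 1, hNnorm ((hN' _).mpr ⟨1, rfl⟩)⟩ : (Subgroup.normalizer (P : Set (Matrix.SpecialLinearGroup (Fin n) F)))) ∈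
        N.subgroupOf (Subgroup.normalizer (P : Set (Matrix.SpecialLinearGroup (Fin n) F))) :=
      Subgroup.mem_subgroupOf.mpr ((hN' _).mpr ⟨1, rfl⟩)
    rw [hbot, Subgroup.mem_bot] at hmem
    have h := congrArg (fun z : (Subgroup.normalizer (P : Set (Matrix.SpecialLinearGroup (Fin n) F))) =>
      ((z : Matrix.SpecialLinearGroup (Fin n) F) :
        Matrix (Fin n) (Fin n) F) (i0 n hn) (j0 n hn)) hmem
    simp only [T_coe] at h
    rw [Matrix.add_apply, one_apply_ne (i0_ne_j0 hn), single_apply_same, zero_add] at h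
    have h1 : ((1 : (Subgroup.normalizer (P : Set (Matrix.SpecialLinearGroup (Fin n) F)))) : Matrix.SpecialLinearGroup (Fin n) F) = 1 := rfl
    rw [h1] at h
    rw [Matrix.SpecialLinearGroup.coe_one, one_apply_ne (i0_ne_j0 hn)] at h
    exact one_ne_zero h
  -- Part 5 : minimality
  · intro W hWnormal hWle
    by_cases hWbot : W = ⊥
    · exact Or.inl hWbot
    right
    obtain ⟨w, hwW, hw1⟩ : ∃ w ∈ W, w ≠ 1 := by
      by_contra hcon
      push_neg at hcon
      exact hWbot ((Subgroup.eq_bot_iff_forall W).mpr hcon)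
    have hwN : (w : Matrix.SpecialLinearGroup (Fin n) F) ∈ N :=
      Subgroup.mem_subgroupOf.mp (hWle hwW)
    obtain ⟨a, hwa⟩ := (hN' _).mp hwN
    have ha : a ≠ 0 := by
      intro ha0
      apply hw1
      apply Subtype.ext
      apply Subtype.ext
      rw [hwa, ha0, single_zero, add_zero]
      rfl
    have hwT : (w : Matrix.SpecialLinearGroup (Fin n) F) = T hn a := Subtype.ext hwa
    -- all T (t*t*a) lie in W
    have hU : ∀ t : F, (⟨T hn (t * t * a), hNnorm ((hN' _).mpr ⟨t * t * a, rfl⟩)⟩ :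
        (Subgroup.normalizer (P : Set (Matrix.SpecialLinearGroup (Fin n) F)))) ∈ W := by
      intro t
      by_cases ht : t = 0
      · have : (⟨T hn (t * t * a), hNnorm ((hN' _).mpr ⟨t * t * a, rfl⟩)⟩ :
            (Subgroup.normalizer (P : Set (Matrix.SpecialLinearGroup (Fin n) F)))) = 1 := by
          apply Subtype.ext
          apply Subtype.ext
          rw [T_coe, ht, zero_mul, zero_mul, single_zero, add_zero]
          rfl
        rw [this]
        exact W.one_mem
      · set D : (Subgroup.normalizer (P : Set (Matrix.SpecialLinearGroup (Fin n) F))) := ⟨Dg hn t ht, hDgnorm t ht⟩ with hD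
        have hconj := hWnormal.conj_mem w hwW D
        have heq : D * w * D⁻¹ = (⟨T hn (t * t * a),
            hNnorm ((hN' _).mpr ⟨t * t * a, rfl⟩)⟩ : (Subgroup.normalizer (P : Set (Matrix.SpecialLinearGroup (Fin n) F)))) := by
          apply Subtype.ext
          show (D : Matrix.SpecialLinearGroup (Fin n) F) *
            (w : Matrix.SpecialLinearGroup (Fin n) F) *
            ((D : Matrix.SpecialLinearGroup (Fin n) F))⁻¹ = T hn (t * t * a)
          rw [hwT]
          exact Dg_conj_T hn t ht a
        rw [heq] at hconj
        exact hconj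
    apply le_antisymm hWle
    intro z hz
    obtain ⟨b, hzb⟩ := (hN' _).mp (Subgroup.mem_subgroupOf.mp hz)
    obtain ⟨u, v, huv⟩ := sum_two_squares (F := F) (b / a)
    have hb : u * u * a + v * v * a = b := by
      rw [eq_div_iff ha] at huv
      linear_combination huv
    have hzeq : z = (⟨T hn (u * u * a), hNnorm ((hN' _).mpr ⟨u * u * a, rfl⟩)⟩ :
        (Subgroup.normalizer (P : Set (Matrix.SpecialLinearGroup (Fin n) F)))) * ⟨T hn (v * v * a), hNnorm ((hN' _).mpr ⟨v * v * a, rfl⟩)⟩ := by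
      apply Subtype.ext
      show (z : Matrix.SpecialLinearGroup (Fin n) F) = T hn (u * u * a) * T hn (v * v * a)
      rw [T_mul hn, hb]
      exact Subtype.ext hzb
    rw [hzeq]
    exact W.mul_mem (hU u) (hU v)
end
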